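/- arXiv:math/0412091 — 5 statements merged into one kernel-verified Lean document; each statement's English description precedes it below -/
import Mathlib

section
/- The statistics maj and rmaj_n are equidistributed on the set {σ ∈ S_n : des(σ) = s} for every s; that is, for each s and each m, the number of permutations σ ∈ S_n with des(σ)=s and maj(σ)=m equals the number with des(σ)=s and rmaj_n(σ)=m. -/
/-!
Conjugating `σ` by the reversal `i ↦ n - 1 - i` (reverse, then complement the values) is an
involution of `S_n` that moves a descent at position `i` to position `n - i`. It therefore
preserves `des` and carries `rmaj_n` to `maj`.
-/

open Finset
open scoped Classical

/-- The descent set of a permutation of `{1,…,n}` (0-based: `i ∈ DesC σ` means a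
descent at the (i+1)-st position, i.e. `σ(i+1) > σ(i+2)` in 1-based notation). -/
noncomputable def DesC {n : ℕ} (σ : Equiv.Perm (Fin n)) : Finset ℕ :=
  (Finset.range (n - 1)).filter (fun i =>
    ∃ h : i + 1 < n, σ ⟨i + 1, h⟩ < σ ⟨i, by omega⟩)

noncomputable def desC {n : ℕ} (σ : Equiv.Perm (Fin n)) : ℕ := (DesC σ).card

/-- `maj(σ) = Σ_{i ∈ Des(σ)} i` (1-based positions). -/
noncomputable def majC {n : ℕ} (σ : Equiv.Perm (Fin n)) : ℕ := ∑ i ∈ DesC σ, (i + 1)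

/-- `rmaj_n(σ) = Σ_{i ∈ Des(σ)} (n - i)` (1-based positions). -/
noncomputable def rmajC {n : ℕ} (σ : Equiv.Perm (Fin n)) : ℕ := ∑ i ∈ DesC σ, (n - (i + 1))

namespace Equiv.Perm

variable {n : ℕ}

def revCompl (σ : Perm (Fin n)) : Perm (Fin n) :=
  Fin.revPerm * σ * Fin.revPerm

theorem revCompl_involutive : Function.Involutive (revCompl (n := n)) := by
  intro σ
  ext x
  simp [revCompl]

theorem lt_of_mem_DesC {σ : Perm (Fin n)} {i : ℕ} (hi : i ∈ DesC σ) : i < n - 1 :=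
  mem_range.mp (mem_filter.mp hi).1

theorem mem_DesC_revCompl_iff (σ : Perm (Fin n)) {i : ℕ} (hi : i < n - 1) :
    i ∈ DesC (revCompl σ) ↔ n - 2 - i ∈ DesC σ := by
  have rev_succ : (⟨i + 1, by omega⟩ : Fin n).rev = ⟨n - 2 - i, by omega⟩ := by
    ext; simp only [Fin.val_rev]; omega
  have rev_self : (⟨i, by omega⟩ : Fin n).rev = ⟨n - 2 - i + 1, by omega⟩ := by
    ext; simp only [Fin.val_rev]; omega
  simp only [DesC, mem_filter, mem_range, revCompl, Perm.mul_apply, Fin.revPerm_apply,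
    Fin.rev_lt_rev, rev_succ, rev_self]
  exact ⟨fun ⟨_, _, h⟩ => ⟨by omega, by omega, h⟩, fun ⟨_, _, h⟩ => ⟨hi, by omega, h⟩⟩

theorem injOn_DesC_reflect (σ : Perm (Fin n)) :
    Set.InjOn (fun j => n - 2 - j) (DesC σ : Set ℕ) := by
  intro a ha b hb hab
  have := lt_of_mem_DesC ha
  have := lt_of_mem_DesC hb
  simp only at hab
  omega

theorem DesC_revCompl (σ : Perm (Fin n)) :
    DesC (revCompl σ) = (DesC σ).image (fun j => n - 2 - j) := by
  ext i
  rw [mem_image]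
  constructor
  · intro hi
    exact ⟨n - 2 - i, (mem_DesC_revCompl_iff σ (lt_of_mem_DesC hi)).mp hi, by
      have := lt_of_mem_DesC hi; omega⟩
  · rintro ⟨j, hj, rfl⟩
    have := lt_of_mem_DesC hj
    rw [mem_DesC_revCompl_iff σ (by omega), show n - 2 - (n - 2 - j) = j by omega]
    exact hj

theorem desC_revCompl (σ : Perm (Fin n)) : desC (revCompl σ) = desC σ := by
  rw [desC, DesC_revCompl, card_image_of_injOn (injOn_DesC_reflect σ), desC]

theorem majC_revCompl (σ : Perm (Fin n)) : majC (revCompl σ) = rmajC σ := by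
  rw [majC, DesC_revCompl, sum_image (injOn_DesC_reflect σ), rmajC]
  refine sum_congr rfl fun j hj => ?_
  have := lt_of_mem_DesC hj
  omega

end Equiv.Perm

/-- `maj` and `rmaj_n` are equidistributed on `{σ ∈ S_n : des σ = s}` for every `s`. -/
theorem maj_rmaj_equidistributed (n s m : ℕ) :
    (Finset.univ.filter
        (fun σ : Equiv.Perm (Fin n) => desC σ = s ∧ majC σ = m)).card =
    (Finset.univ.filter
        (fun σ : Equiv.Perm (Fin n) => desC σ = s ∧ rmajC σ = m)).card :=
  (card_equiv Equiv.Perm.revCompl_involutive.toPerm fun σ => by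
    simp [Equiv.Perm.desC_revCompl, Equiv.Perm.majC_revCompl]).symm
end

section
/- Insertion preserves or increments descents: let σ ∈ C_a ≀ S_{n-1} with L-descent set Des_L(σ) = {i_1 < ⋯ < i_s} (so s = des_L(σ)) and let {i_{s+1} > ⋯ > i_n} = {0,…,n-1} \ Des_L(σ). Then for 1 ≤ k ≤ n and 0 ≤ t ≤ a-1, des_L(φ_n(σ, i_k, t)) equals s if (k < s+1) or (k = s+1 and t ∉ L), and equals s+1 if (k > s+1) or (k = s+1 and t ∈ L). -/
open Finset Polynomial
open scoped Classical

/-- An element of the wreath product `C_a ≀ S_n`, viewed as a colored permutation: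
the window is `[σ(1),…,σ(n)]` where `|σ(i)| = π(i)` (1-based) and the color of the
letter in position `i` is `c(i)`, i.e. `σ(i) = α^{c(i)} |σ(i)|`. -/
abbrev ColPerm (a n : ℕ) := Equiv.Perm (Fin n) × (Fin n → Fin a)

/-- A rank function realizing (a canonical choice of) the linear order `<_L` of
Regev–Roichman on the letters `α^t j` (encoded as the pair `(t, j)` with `1 ≤ j`)
together with `0` (encoded as `(t, 0)`): letters with color in `L` are negative,
ordered with larger absolute value smaller; letters with color not in `L` are
positive, ordered with larger absolute value larger; `x <_L y ↔ rkL L x < rkL L y`. -/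
def rkL {a : ℕ} (L : Finset (Fin a)) (x : Fin a × ℕ) : ℤ :=
  if x.2 = 0 then 0
  else if x.1 ∈ L then -((x.2 : ℤ) * a + (x.1 : ℤ)) else (x.2 : ℤ) * a + (x.1 : ℤ)

/-- The letter `σ(i)` (as a color/absolute-value pair) in position `i` (1-based) of
the window of `σ`; positions outside `{1,…,n}` give the letter `0`. -/
def wval {a n : ℕ} [NeZero a] (σ : ColPerm a n) (i : ℕ) : Fin a × ℕ :=
  if h : 1 ≤ i ∧ i ≤ n then (σ.2 ⟨i - 1, by omega⟩, (σ.1 ⟨i - 1, by omega⟩ : ℕ) + 1)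
  else (0, 0)

/-- The `L`-descent set `Des_L(σ) = {0 ≤ i ≤ n-1 : σ(i) >_L σ(i+1)}`, with `σ(0) := 0`. -/
def DesL {a n : ℕ} [NeZero a] (L : Finset (Fin a)) (σ : ColPerm a n) : Finset ℕ :=
  (Finset.range n).filter (fun i => rkL L (wval σ (i + 1)) < rkL L (wval σ i))

/-- The `L`-descent number `des_L(σ) = |Des_L(σ)|`. -/
def desL {a n : ℕ} [NeZero a] (L : Finset (Fin a)) (σ : ColPerm a n) : ℕ := (DesL L σ).card

/-- The `L`-reverse major index `rmaj_{L,n}(σ) = Σ_{i ∈ Des_L(σ)} (n - i)`. -/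
def rmajL {a n : ℕ} [NeZero a] (L : Finset (Fin a)) (σ : ColPerm a n) : ℕ :=
  ∑ i ∈ DesL L σ, (n - i)

/-- The insertion map `φ_{n+1}(σ, r, t) = [σ_1,…,σ_r, α^t (n+1), σ_{r+1},…,σ_n]`,
inserting the letter `α^t (n+1)` after position `r` in the window of `σ ∈ C_a ≀ S_n`. -/
def phi {a n : ℕ} (σ : ColPerm a n) (r : Fin (n + 1)) (t : Fin a) : ColPerm a (n + 1) :=
  (((Fin.revPerm.trans (Fin.cycleRange r.rev)).trans Fin.revPerm).trans
      ((finSuccEquivLast.trans (Equiv.optionCongr σ.1)).trans finSuccEquivLast.symm),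
   Fin.insertNth r t σ.2)

/-!
The inserted letter `α^t (n+1)` has the largest absolute value, so under `<_L` it lies below
every other letter and `0` when `t ∈ L`, and above all of them when `t ∉ L`. Inserting it in
slot `r` therefore keeps every descent of `σ` other than `r` (shifted past the new letter) and
replaces the pair `(σ(r), σ(r+1))` by `(σ(r), α^t (n+1))` and `(α^t (n+1), σ(r+1))`, so
`des_L(φ(σ, r, t)) = des_L(σ) - [r ∈ Des_L σ] + [t ∈ L ∨ r < n]`. For `k ≤ s` the slot `i_k`
is a descent, hence `< n`; since `n` is never a descent, `i_{s+1}` is the largest non-descent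
`n`, and `i_k < n` is a non-descent for `k > s+1`.
-/

section

variable {a n : ℕ}

def natSuccAbove (r i : ℕ) : ℕ := if i < r then i else i + 1

lemma natSuccAbove_injective (r : ℕ) : Function.Injective (natSuccAbove r) := by
  intro i j h; unfold natSuccAbove at h; split_ifs at h <;> omega

lemma natSuccAbove_succ (r : Fin (n + 1)) (i : Fin n) :
    natSuccAbove (r + 1) (i + 1) = (r.succAbove i : ℕ) + 1 := by
  rcases lt_or_ge (i : ℕ) r with h | h
  · rw [Fin.succAbove_of_castSucc_lt _ _ h]; simp [natSuccAbove, h]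
  · rw [Fin.succAbove_of_le_castSucc _ _ h]; simp [natSuccAbove]; omega

/-- `natSuccAbove r` is a bijection from `ℕ ∖ {r}` onto `ℕ ∖ {r, r + 1}`, so the hypothesis
makes `T ∖ {r, r + 1}` the image of `S.erase r`. -/
lemma card_add_ite_eq_of_natSuccAbove_mem_iff {S T : Finset ℕ} {r : ℕ}
    (h : ∀ i ≠ r, natSuccAbove r i ∈ T ↔ i ∈ S) :
    #T + (if r ∈ S then 1 else 0) =
      #S + (if r ∈ T then 1 else 0) + (if r + 1 ∈ T then 1 else 0) := by
  have hsdiff : T \ {r, r + 1} = (S.erase r).image (natSuccAbove r) := by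
    ext j
    simp only [mem_sdiff, mem_insert, mem_singleton, mem_image, mem_erase, not_or]
    constructor
    · rintro ⟨hj, hjr, hjr'⟩
      set i := if j < r then j else j - 1
      have hi : natSuccAbove r i = j := by
        unfold natSuccAbove i; split_ifs <;> omega
      have hir : i ≠ r := by unfold i; split_ifs <;> omega
      exact ⟨i, ⟨hir, (h i hir).1 (hi ▸ hj)⟩, hi⟩
    · rintro ⟨i, ⟨hir, hi⟩, rfl⟩
      exact ⟨(h i hir).2 hi, by unfold natSuccAbove; split_ifs <;> omega⟩
  have hinter : #(T ∩ {r, r + 1}) = (if r ∈ T then 1 else 0) + (if r + 1 ∈ T then 1 else 0) := by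
    rw [inter_comm, ← filter_mem_eq_inter, card_filter, sum_pair (by omega)]
  rw [← card_inter_add_card_sdiff T {r, r + 1}, hinter, hsdiff,
    card_image_of_injective _ (natSuccAbove_injective r)]
  by_cases hr : r ∈ S
  · rw [card_erase_of_mem hr, if_pos hr]
    have := card_pos.2 ⟨r, hr⟩
    omega
  · rw [erase_eq_of_notMem hr, if_neg hr]
    omega

section sort

variable {α : Type*} [LinearOrder α] (U : Finset α) (d : α)

lemma getD_sort_mem {j : ℕ} (hj : j < #U) : (U.sort (· ≤ ·)).getD j d ∈ U := by
  rw [List.getD_eq_getElem _ _ (by rwa [length_sort])]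
  exact (mem_sort _).1 (List.getElem_mem _)

lemma getD_sort_card_sub_one (hU : U.Nonempty) :
    (U.sort (· ≤ ·)).getD (#U - 1) d = U.max' hU := by
  rw [max'_eq_sorted_last,
    List.getD_eq_getElem _ _ (by rw [length_sort]; exact Nat.sub_one_lt hU.card_ne_zero)]
  simp only [length_sort]

lemma getD_sort_lt_max' (hU : U.Nonempty) {j : ℕ} (hj : j + 1 < #U) :
    (U.sort (· ≤ ·)).getD j d < U.max' hU := by
  rw [← getD_sort_card_sub_one U d hU, List.getD_eq_getElem _ _ (by rw [length_sort]; omega),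
    List.getD_eq_getElem _ _ (by rw [length_sort]; omega),
    (sortedLT_sort U).getElem_lt_getElem_iff]
  omega

end sort

section rkL

variable (L : Finset (Fin a)) {x y : Fin a × ℕ}

lemma mul_add_lt_mul_add_of_snd_lt (h : x.2 < y.2) :
    (x.2 : ℤ) * a + x.1 < (y.2 : ℤ) * a + y.1 := by
  have hx : (x.1 : ℤ) < a := mod_cast x.1.isLt
  have hxy : (x.2 : ℤ) + 1 ≤ y.2 := mod_cast h
  nlinarith

lemma rkL_lt_of_snd_lt_of_mem (h : x.2 < y.2) (hy : y.1 ∈ L) : rkL L y < rkL L x := by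
  have := mul_add_lt_mul_add_of_snd_lt h
  unfold rkL
  split_ifs <;> first | omega | nlinarith

lemma rkL_lt_of_snd_lt_of_notMem (h : x.2 < y.2) (hy : y.1 ∉ L) : rkL L x < rkL L y := by
  have := mul_add_lt_mul_add_of_snd_lt h
  unfold rkL
  split_ifs <;> first | omega | nlinarith

end rkL

section phi

variable (σ : ColPerm a n) (r : Fin (n + 1)) (t : Fin a)

lemma phi_fst_succAbove (i : Fin n) : (phi σ r t).1 (r.succAbove i) = (σ.1 i).castSucc := by
  simp [phi, Fin.rev_succAbove, Fin.cycleRange_succAbove, Fin.rev_succ]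

lemma phi_fst_self : (phi σ r t).1 r = Fin.last n := by
  simp [phi, Fin.cycleRange_self]

lemma phi_snd_succAbove (i : Fin n) : (phi σ r t).2 (r.succAbove i) = σ.2 i := by
  simp [phi]

lemma phi_snd_self : (phi σ r t).2 r = t := by
  simp [phi]

end phi

variable [NeZero a]

section wval

variable (σ : ColPerm a n)

lemma wval_succ (i : Fin n) : wval σ (i + 1) = (σ.2 i, (σ.1 i : ℕ) + 1) := by
  simp [wval]

lemma wval_zero : wval σ 0 = (0, 0) := by
  simp [wval]

lemma wval_of_lt {p : ℕ} (hp : n < p) : wval σ p = (0, 0) := by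
  simp [wval]; omega

lemma wval_snd_le (p : ℕ) : (wval σ p).2 ≤ n := by
  unfold wval; split <;> simp

variable (r : Fin (n + 1)) (t : Fin a)

lemma wval_phi_natSuccAbove (p : ℕ) :
    wval (phi σ r t) (natSuccAbove (r + 1) p) = wval σ p := by
  rcases p with _ | p
  · simp [natSuccAbove, wval_zero]
  rcases lt_or_ge p n with hp | hp
  · lift p to Fin n using hp
    rw [natSuccAbove_succ, wval_succ, wval_succ, phi_fst_succAbove, phi_snd_succAbove]
    rfl
  · rw [wval_of_lt _ (by unfold natSuccAbove; split <;> omega), wval_of_lt _ (by omega)]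

lemma wval_phi_self_succ : wval (phi σ r t) (r + 1) = (t, n + 1) := by
  rw [wval_succ, phi_fst_self, phi_snd_self, Fin.val_last]

end wval

section DesL

variable (L : Finset (Fin a)) (σ : ColPerm a n)

lemma DesL_subset_range : DesL L σ ⊆ range n := filter_subset _ _

lemma self_notMem_DesL : n ∉ DesL L σ :=
  fun h => lt_irrefl n (mem_range.1 (DesL_subset_range L σ h))

lemma card_range_succ_sdiff_DesL : #(range (n + 1) \ DesL L σ) = n + 1 - desL L σ := by
  rw [card_sdiff_of_subset ((DesL_subset_range L σ).trans (range_subset_range.2 n.le_succ)),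
    card_range, desL]

lemma self_mem_range_succ_sdiff_DesL : n ∈ range (n + 1) \ DesL L σ :=
  mem_sdiff.2 ⟨self_mem_range_succ n, self_notMem_DesL L σ⟩

lemma max'_range_succ_sdiff_DesL :
    (range (n + 1) \ DesL L σ).max' ⟨n, self_mem_range_succ_sdiff_DesL L σ⟩ = n :=
  le_antisymm (max'_le _ _ _ fun _ h => Nat.lt_succ_iff.1 (mem_range.1 (mem_sdiff.1 h).1))
    (le_max' _ _ (self_mem_range_succ_sdiff_DesL L σ))

variable (r : Fin (n + 1)) (t : Fin a)

lemma natSuccAbove_mem_DesL_phi_iff {i : ℕ} (hi : i ≠ r) :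
    natSuccAbove r i ∈ DesL L (phi σ r t) ↔ i ∈ DesL L σ := by
  have hpos : natSuccAbove (r + 1) i = natSuccAbove r i := by
    unfold natSuccAbove; split_ifs <;> omega
  have hsucc : natSuccAbove (r + 1) (i + 1) = natSuccAbove r i + 1 := by
    unfold natSuccAbove; split_ifs <;> omega
  have hlt : natSuccAbove r i < n + 1 ↔ i < n := by
    have := r.isLt; unfold natSuccAbove; split_ifs <;> omega
  simp only [DesL, mem_filter, mem_range, hlt]
  rw [← hsucc, ← hpos, wval_phi_natSuccAbove, wval_phi_natSuccAbove]

lemma self_mem_DesL_phi_iff : (r : ℕ) ∈ DesL L (phi σ r t) ↔ t ∈ L := by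
  have hr : natSuccAbove (r + 1) r = r := by simp [natSuccAbove]
  have hσr := Nat.lt_succ_of_le (wval_snd_le σ r)
  simp only [DesL, mem_filter, mem_range, r.isLt, true_and, wval_phi_self_succ]
  rw [← hr, wval_phi_natSuccAbove]
  by_cases ht : t ∈ L
  · simp [ht, rkL_lt_of_snd_lt_of_mem L (y := (t, n + 1)) hσr ht]
  · simp [ht, lt_asymm (rkL_lt_of_snd_lt_of_notMem L (y := (t, n + 1)) hσr ht)]

lemma succ_mem_DesL_phi_iff : (r : ℕ) + 1 ∈ DesL L (phi σ r t) ↔ t ∉ L ∧ (r : ℕ) < n := by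
  have hr : natSuccAbove (r + 1) (r + 1) = r + 1 + 1 := by simp [natSuccAbove]
  have hσr := Nat.lt_succ_of_le (wval_snd_le σ (r + 1))
  simp only [DesL, mem_filter, mem_range, add_lt_add_iff_right, wval_phi_self_succ]
  rw [← hr, wval_phi_natSuccAbove]
  by_cases ht : t ∈ L
  · simp [ht, lt_asymm (rkL_lt_of_snd_lt_of_mem L (y := (t, n + 1)) hσr ht)]
  · simp [ht, rkL_lt_of_snd_lt_of_notMem L (y := (t, n + 1)) hσr ht]

lemma desL_phi_add :
    desL L (phi σ r t) + (if (r : ℕ) ∈ DesL L σ then 1 else 0) =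
      desL L σ + (if t ∈ L then 1 else 0) + (if t ∉ L ∧ (r : ℕ) < n then 1 else 0) := by
  have := card_add_ite_eq_of_natSuccAbove_mem_iff
    (fun i hi => natSuccAbove_mem_DesL_phi_iff L σ r t (i := i) hi)
  simpa only [desL, self_mem_DesL_phi_iff, succ_mem_DesL_phi_iff] using this

lemma desL_phi_of_mem (hr : (r : ℕ) ∈ DesL L σ) : desL L (phi σ r t) = desL L σ := by
  have key := desL_phi_add L σ r t
  have hrn := mem_range.1 (DesL_subset_range L σ hr)
  by_cases ht : t ∈ L <;> simp [ht, hr, hrn] at key <;> omega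

lemma desL_phi_last : desL L (phi σ (Fin.last n) t) = desL L σ + if t ∈ L then 1 else 0 := by
  have key := desL_phi_add L σ (Fin.last n) t
  by_cases ht : t ∈ L <;> simp [ht, self_notMem_DesL] at key ⊢ <;> exact key

lemma desL_phi_of_notMem_of_lt (hr : (r : ℕ) ∉ DesL L σ) (hrn : (r : ℕ) < n) :
    desL L (phi σ r t) = desL L σ + 1 := by
  have key := desL_phi_add L σ r t
  by_cases ht : t ∈ L <;> simp [ht, hr, hrn] at key <;> omega

end DesL

end

/-- Insertion lemma, descent part: let `Des_L(σ) = {i_1 < ⋯ < i_s}` and let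
`{i_{s+1} > ⋯ > i_{n+1}} = {0,…,n} \ Des_L(σ)` be the non-descents, from right
to left (here `σ ∈ C_a ≀ S_n`, so `s = des_L(σ)` and the insertion produces an
element of `C_a ≀ S_{n+1}`). Then for `1 ≤ k ≤ n+1` and any color `t`,
`des_L(φ(σ, i_k, t))` equals `s` if `k < s+1`, or `k = s+1` and `t ∉ L`,
and equals `s+1` if `k > s+1`, or `k = s+1` and `t ∈ L`. -/
theorem desL_phi_insert {a n : ℕ} [NeZero a] (L : Finset (Fin a)) (σ : ColPerm a n)
    (s : ℕ) (hs : s = desL L σ) (k : ℕ) (hk1 : 1 ≤ k) (hk2 : k ≤ n + 1) (t : Fin a)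
    (ik : ℕ)
    (hik : ik = if k ≤ s then ((DesL L σ).sort (· ≤ ·)).getD (k - 1) 0
      else (((Finset.range (n + 1) \ DesL L σ).sort (· ≤ ·)).reverse).getD (k - s - 1) 0)
    (r : Fin (n + 1)) (hr : (r : ℕ) = ik) :
    desL L (phi σ r t) =
      if k < s + 1 ∨ (k = s + 1 ∧ t ∉ L) then s else s + 1 := by
  subst hs hik
  by_cases hks : k ≤ desL L σ
  · rw [if_pos hks] at hr
    have hrD : (r : ℕ) ∈ DesL L σ := by
      rw [hr]; exact getD_sort_mem _ _ (by rw [← desL]; omega)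
    rw [desL_phi_of_mem L σ r t hrD, if_pos (Or.inl (by omega))]
  set U := range (n + 1) \ DesL L σ
  have hU : #U = n + 1 - desL L σ := card_range_succ_sdiff_DesL L σ
  have hUne : U.Nonempty := ⟨n, self_mem_range_succ_sdiff_DesL L σ⟩
  rw [if_neg hks, List.getD_reverse _ (by rw [length_sort]; omega), length_sort] at hr
  rcases (show k = desL L σ + 1 ∨ desL L σ + 1 < k by omega) with hk | hk
  · have hrn : r = Fin.last n := by
      rw [Fin.ext_iff, hr, show #U - 1 - (k - desL L σ - 1) = #U - 1 by omega,
        getD_sort_card_sub_one _ _ hUne, max'_range_succ_sdiff_DesL, Fin.val_last]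
    subst hrn
    by_cases ht : t ∈ L <;> simp [desL_phi_last, ht, hk]
  · have hrD : (r : ℕ) ∉ DesL L σ := by
      rw [hr]; exact (mem_sdiff.1 (getD_sort_mem U _ (by omega))).2
    have hrn : (r : ℕ) < n := by
      have := getD_sort_lt_max' U 0 hUne (j := #U - 1 - (k - desL L σ - 1)) (by omega)
      rwa [max'_range_succ_sdiff_DesL, ← hr] at this
    rw [desL_phi_of_notMem_of_lt L σ r t hrD hrn, if_neg (by omega)]
end

section
/- The Euler-Mahonian polynomials satisfy the functional recurrence (1−q)·A_{a,ℓ,n}(t,q) = (a − (1−q)ℓ)(1 − t q^n)·A_{a,ℓ,n-1}(t,q) − a q (1−t)·A_{a,ℓ,n-1}(tq, q) for all integers n > 0, a > 0, 0 ≤ ℓ ≤ a. -/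
open Finset Polynomial
open scoped Classical

/-- The two-variable generating polynomial
`A_{a,L,n}(t,q) = Σ_{σ ∈ C_a≀S_n} t^{des_L σ} q^{rmaj_{L,n} σ}`, with `t` the outer
variable and `q` the inner variable. -/
noncomputable def Amaj (a n : ℕ) [NeZero a] (L : Finset (Fin a)) :
    Polynomial (Polynomial ℚ) :=
  ∑ σ : ColPerm a n, Polynomial.C ((X : Polynomial ℚ) ^ rmajL L σ) * X ^ desL L σ

/-!
Every colored permutation of size `m + 1` arises exactly once by inserting the letter `m + 1`,
with some color `c`, at some position `p` of a colored permutation `τ` of size `m`. That letter is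
`<_L`-smallest if `c ∈ L` and `<_L`-largest otherwise, so in the descent word of `τ` (the
indicator of `Des_L τ` on `0, …, m - 1`) the insertion replaces the letter at `p` by the pair
`(c ∈ L, c ∉ L)`.

Label the descent slots of `τ` by `0, …, des τ - 1` from left to right and the other slots
`p ≤ m` by `des τ, …, m` from right to left. Inserting into the slot labelled `k` raises `rmaj`
by `k + [c ∈ L]` and `des` by `[des τ + [c ∉ L] ≤ k]`. Summing over the slots thus gives a
truncated geometric series in `q` whose power of `t` jumps once; multiplying by `1 - q` and
summing over the `a` colors gives the recurrence.
-/

lemma sum_range_eq_add_sum_Ico {M : Type*} [AddCommMonoid M] (f : ℕ → M) {p n : ℕ} (h : p < n) :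
    ∑ i ∈ range n, f i = ∑ i ∈ range p, f i + f p + ∑ i ∈ Ico (p + 1) n, f i := by
  rw [← sum_range_add_sum_Ico f h.le, sum_eq_sum_Ico_succ_bot h, add_assoc]

section SlotLabel

variable (D : ℕ → Prop) [DecidablePred D] (m : ℕ)

def slotLabel (p : ℕ) : ℕ := #{i ∈ range p | D i} + if p < m ∧ D p then 0 else m - p

variable {D m}

lemma card_filter_range_lt_of_lt {p₁ p₂ : ℕ} (h : p₁ < p₂) (hD : D p₁) :
    #{i ∈ range p₁ | D i} < #{i ∈ range p₂ | D i} :=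
  card_lt_card <| (ssubset_iff_of_subset (filter_subset_filter _ (range_subset_range.2 h.le))).2
    ⟨p₁, mem_filter.2 ⟨mem_range.2 h, hD⟩, by simp⟩

lemma card_filter_Ico_lt_of_lt {p₁ p₂ : ℕ} (h : p₁ < p₂) (hm : p₁ < m) (hD : ¬D p₁) :
    #{i ∈ Ico p₂ m | ¬D i} < #{i ∈ Ico p₁ m | ¬D i} :=
  card_lt_card <| (ssubset_iff_of_subset (filter_subset_filter _ (Ico_subset_Ico_left h.le))).2
    ⟨p₁, mem_filter.2 ⟨mem_Ico.2 ⟨le_rfl, hm⟩, hD⟩, by simp [h]⟩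

lemma slotLabel_lt_card {p : ℕ} (h : p < m ∧ D p) : slotLabel D m p < #{i ∈ range m | D i} := by
  rw [slotLabel, if_pos h, add_zero]
  exact card_filter_range_lt_of_lt h.1 h.2

lemma slotLabel_eq_card_add {p : ℕ} (hp : p ≤ m) (h : ¬(p < m ∧ D p)) :
    slotLabel D m p = #{i ∈ range m | D i} + #{i ∈ Ico p m | ¬D i} := by
  have hsplit : #{i ∈ range m | D i} = #{i ∈ range p | D i} + #{i ∈ Ico p m | D i} := by
    simp only [card_filter, sum_range_add_sum_Ico _ hp]
  have hIco : #{i ∈ Ico p m | D i} + #{i ∈ Ico p m | ¬D i} = m - p := by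
    rw [card_filter_add_card_filter_not, Nat.card_Ico]
  rw [slotLabel, if_neg h]
  omega

lemma slotLabel_le {p : ℕ} (hp : p ≤ m) : slotLabel D m p ≤ m := by
  have : #{i ∈ range p | D i} ≤ p := (card_filter_le _ _).trans (card_range p).le
  unfold slotLabel
  split_ifs <;> omega

lemma slotLabel_ne_of_lt {p₁ p₂ : ℕ} (h : p₁ < p₂) (hp₂ : p₂ ≤ m) :
    slotLabel D m p₁ ≠ slotLabel D m p₂ := by
  by_cases h₁ : p₁ < m ∧ D p₁ <;> by_cases h₂ : p₂ < m ∧ D p₂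
  · rw [slotLabel, slotLabel, if_pos h₁, if_pos h₂]
    exact (card_filter_range_lt_of_lt h h₁.2).ne
  · exact ((slotLabel_lt_card h₁).trans_le (slotLabel_eq_card_add hp₂ h₂ ▸ le_self_add)).ne
  · exact ((slotLabel_lt_card h₂).trans_le
      (slotLabel_eq_card_add (h.le.trans hp₂) h₁ ▸ le_self_add)).ne'
  · rw [slotLabel_eq_card_add (h.le.trans hp₂) h₁, slotLabel_eq_card_add hp₂ h₂]
    have hp₁ : p₁ < m := by omega
    exact (Nat.add_lt_add_left (card_filter_Ico_lt_of_lt h hp₁ fun hD ↦ h₁ ⟨hp₁, hD⟩) _).ne'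

lemma sum_range_slotLabel {M : Type*} [AddCommMonoid M] (f : ℕ → M) :
    ∑ p ∈ range (m + 1), f (slotLabel D m p) = ∑ i ∈ range (m + 1), f i := by
  have hmaps : Set.MapsTo (slotLabel D m) (range (m + 1)) (range (m + 1)) := fun p hp ↦
    mem_range.2 (Nat.lt_succ_of_le (slotLabel_le (Nat.le_of_lt_succ (mem_range.1 hp))))
  have hinj : Set.InjOn (slotLabel D m) (range (m + 1)) := by
    intro p₁ hp₁ p₂ hp₂ heq
    simp only [coe_range, Set.mem_Iio] at hp₁ hp₂
    by_contra hne
    rcases lt_or_gt_of_ne hne with h | h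
    · exact slotLabel_ne_of_lt h (by omega) heq
    · exact slotLabel_ne_of_lt h (by omega) heq.symm
  exact sum_nbij (slotLabel D m) hmaps hinj (surjOn_of_injOn_of_card_le _ hmaps hinj le_rfl)
    fun _ _ ↦ rfl

lemma card_le_slotLabel_iff {p : ℕ} (hp : p ≤ m) :
    #{i ∈ range m | D i} ≤ slotLabel D m p ↔ ¬(p < m ∧ D p) := by
  by_cases h : p < m ∧ D p
  · simpa [h] using slotLabel_lt_card h
  · simp [h, slotLabel_eq_card_add hp h]

lemma card_lt_slotLabel_iff {p : ℕ} (hp : p ≤ m) :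
    #{i ∈ range m | D i} < slotLabel D m p ↔ p < m ∧ ¬D p := by
  by_cases h : p < m ∧ D p
  · simpa [h] using (slotLabel_lt_card h).le
  · rw [slotLabel_eq_card_add hp h, lt_add_iff_pos_right, card_pos]
    constructor
    · rintro ⟨i, hi⟩
      simp only [mem_filter, mem_Ico] at hi
      exact ⟨by omega, fun hD ↦ h ⟨by omega, hD⟩⟩
    · exact fun h' ↦ ⟨p, by simp [h'.1, h'.2]⟩

end SlotLabel

section SplitsAt

variable {D D' : ℕ → Prop} [DecidablePred D] [DecidablePred D'] {p m : ℕ} {e : Prop} [Decidable e]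

structure SplitsAt (D D' : ℕ → Prop) (p : ℕ) (e : Prop) : Prop where
  lt : ∀ i < p, D' i ↔ D i
  self : D' p ↔ e
  succ : D' (p + 1) ↔ ¬e
  gt : ∀ i, p < i → (D' (i + 1) ↔ D i)

lemma SplitsAt.sum_range_succ_ite_of_lt {M : Type*} [AddCommMonoid M] (h : SplitsAt D D' p e)
    (hp : p < m) (w : ℕ → M) :
    ∑ i ∈ range (m + 1), (if D' i then w i else 0) =
      ∑ i ∈ range p, (if D i then w i else 0) + (if e then w p else w (p + 1)) +
        ∑ i ∈ Ico (p + 1) m, (if D i then w (i + 1) else 0) := by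
  have hlt : ∑ i ∈ range p, (if D' i then w i else 0) = ∑ i ∈ range p, (if D i then w i else 0) :=
    sum_congr rfl fun i hi ↦ if_congr (h.lt i (mem_range.1 hi)) rfl rfl
  have hself : (if D' p then w p else 0) + (if D' (p + 1) then w (p + 1) else 0) =
      if e then w p else w (p + 1) := by
    by_cases he : e <;> simp [h.self, h.succ, he]
  have hgt : ∑ i ∈ Ico (p + 1) m, (if D' (i + 1) then w (i + 1) else 0) =
      ∑ i ∈ Ico (p + 1) m, (if D i then w (i + 1) else 0) :=
    sum_congr rfl fun i hi ↦ if_congr (h.gt i (mem_Ico.1 hi).1) rfl rfl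
  rw [sum_range_eq_add_sum_Ico _ (by omega : p < m + 1),
    sum_eq_sum_Ico_succ_bot (by omega : p + 1 < m + 1), ← sum_Ico_add' _ (p + 1) m 1, hlt, hgt,
    ← hself]
  abel

lemma SplitsAt.sum_range_succ_ite_last {M : Type*} [AddCommMonoid M] (h : SplitsAt D D' m e)
    (w : ℕ → M) :
    ∑ i ∈ range (m + 1), (if D' i then w i else 0) =
      ∑ i ∈ range m, (if D i then w i else 0) + (if e then w m else 0) := by
  rw [sum_range_succ, if_congr h.self rfl rfl,
    sum_congr rfl fun i hi ↦ if_congr (h.lt i (mem_range.1 hi)) rfl rfl]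

lemma SplitsAt.card_filter_range_succ (h : SplitsAt D D' p e) (hp : p ≤ m) :
    #{i ∈ range (m + 1) | D' i} = #{i ∈ range m | D i} +
      if (if e then #{i ∈ range m | D i} else #{i ∈ range m | D i} + 1) ≤ slotLabel D m p
      then 1 else 0 := by
  have hle := card_le_slotLabel_iff (D := D) hp
  have hlt := card_lt_slotLabel_iff (D := D) hp
  rcases hp.lt_or_eq with hp | rfl
  · have h' := h.sum_range_succ_ite_of_lt hp fun _ ↦ 1
    have hd := sum_range_eq_add_sum_Ico (fun i ↦ if D i then 1 else 0) hp
    simp only [← card_filter, ite_self] at h' hd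
    by_cases he : e <;> by_cases hD : D p <;> simp_all <;> omega
  · have h' := h.sum_range_succ_ite_last fun _ ↦ 1
    simp only [← card_filter] at h'
    by_cases he : e <;> simp_all

lemma sum_range_ite_add_one_sub (hp : p ≤ m) :
    ∑ i ∈ range p, (if D i then m + 1 - i else 0) =
      ∑ i ∈ range p, (if D i then m - i else 0) + #{i ∈ range p | D i} := by
  rw [card_filter, ← sum_add_distrib]
  refine sum_congr rfl fun i hi ↦ ?_
  have := mem_range.1 hi
  split_ifs <;> omega

lemma SplitsAt.sum_filter_range_succ (h : SplitsAt D D' p e) (hp : p ≤ m) :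
    ∑ i ∈ range (m + 1) with D' i, (m + 1 - i) =
      ∑ i ∈ range m with D i, (m - i) + (if e then 1 else 0) + slotLabel D m p := by
  rw [sum_filter, sum_filter, slotLabel]
  rcases hp.lt_or_eq with hp | rfl
  · rw [h.sum_range_succ_ite_of_lt hp, sum_range_eq_add_sum_Ico _ hp,
      sum_range_ite_add_one_sub hp.le]
    simp only [Nat.add_sub_add_right]
    by_cases he : e <;> by_cases hD : D p <;> simp [he, hD, hp] <;> omega
  · rw [h.sum_range_succ_ite_last, sum_range_ite_add_one_sub le_rfl]
    simp only [lt_irrefl, false_and, if_false, Nat.sub_self, Nat.add_sub_cancel_left]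
    omega

end SplitsAt

section Rank

variable {a m : ℕ} (L : Finset (Fin a))

lemma abs_rkL_lt {x : Fin a × ℕ} (hx : x.2 ≤ m) : |rkL L x| < (m + 1) * a := by
  have hc : ((x.1 : ℕ) : ℤ) < a := by exact_mod_cast x.1.isLt
  have hv : ((x.2 : ℕ) : ℤ) * a ≤ m * a := by gcongr
  have hv₀ : (0 : ℤ) ≤ ((x.2 : ℕ) : ℤ) * a := by positivity
  have hc₀ : (0 : ℤ) ≤ ((x.1 : ℕ) : ℤ) := by positivity
  unfold rkL
  split_ifs <;> rw [abs_lt] <;> constructor <;> linarith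

lemma rkL_mk_succ (c : Fin a) :
    rkL L (c, m + 1) = if c ∈ L then -((m + 1) * a + (c : ℤ)) else (m + 1) * a + (c : ℤ) := by
  simp [rkL]

lemma rkL_lt_rkL_mk_succ_iff {x : Fin a × ℕ} (hx : x.2 ≤ m) (c : Fin a) :
    rkL L x < rkL L (c, m + 1) ↔ c ∉ L := by
  have := abs_lt.1 (abs_rkL_lt L hx)
  have hc : (0 : ℤ) ≤ ((c : ℕ) : ℤ) := by positivity
  rw [rkL_mk_succ]
  split_ifs with hcL <;> simp only [hcL, not_true, not_false_iff, iff_false, iff_true, not_lt] <;>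
    linarith

lemma rkL_mk_succ_lt_rkL_iff {x : Fin a × ℕ} (hx : x.2 ≤ m) (c : Fin a) :
    rkL L (c, m + 1) < rkL L x ↔ c ∈ L := by
  have := abs_lt.1 (abs_rkL_lt L hx)
  have hc : (0 : ℤ) ≤ ((c : ℕ) : ℤ) := by positivity
  rw [rkL_mk_succ]
  split_ifs with hcL <;> simp only [hcL, iff_false, iff_true, not_lt] <;> linarith

end Rank

lemma one_sub_mul_sum_range_pow_mul_pow_ite {R : Type*} [CommRing R] (q t : R) (k d : ℕ)
    {θ n : ℕ} (h : θ ≤ n) :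
    (1 - q) * ∑ i ∈ range n, q ^ (k + i) * t ^ (d + if θ ≤ i then 1 else 0) =
      q ^ k * t ^ d * (1 - q ^ θ + (q ^ θ - q ^ n) * t) := by
  induction n, h using Nat.le_induction with
  | base =>
    have hterm : ∀ i ∈ range θ, q ^ (k + i) * t ^ (d + if θ ≤ i then 1 else 0) =
        q ^ k * t ^ d * q ^ i := fun i hi ↦ by
      rw [if_neg (by simpa using hi), add_zero, pow_add]; ring
    rw [sum_congr rfl hterm, ← mul_sum, mul_left_comm, mul_neg_geom_sum]
    ring
  | succ n hθn ih =>
    rw [sum_range_succ, mul_add, ih, if_pos hθn]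
    ring

namespace ColPerm

variable {a m : ℕ}

/-- Puts the letter `m + 1`, with color `c`, at the `0`-based position `p` of the window of `τ`. -/
def insertMax (τ : ColPerm a m) (c : Fin a) (p : Fin (m + 1)) : ColPerm a (m + 1) :=
  ((finSuccEquiv' p).trans ((Equiv.optionCongr τ.1).trans finSuccEquivLast.symm),
    Fin.insertNth p c τ.2)

@[simp]
lemma insertMax_fst_self (τ : ColPerm a m) (c : Fin a) (p : Fin (m + 1)) :
    (insertMax τ c p).1 p = Fin.last m := by
  simp [insertMax, finSuccEquiv'_at]

@[simp]
lemma insertMax_fst_succAbove (τ : ColPerm a m) (c : Fin a) (p : Fin (m + 1)) (j : Fin m) :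
    (insertMax τ c p).1 (p.succAbove j) = (τ.1 j).castSucc := by
  simp [insertMax, finSuccEquiv'_succAbove, finSuccEquivLast_symm_some]

@[simp]
lemma insertMax_snd (τ : ColPerm a m) (c : Fin a) (p : Fin (m + 1)) :
    (insertMax τ c p).2 = Fin.insertNth p c τ.2 := rfl

lemma insertMax_injective :
    Function.Injective fun x : ColPerm a m × Fin a × Fin (m + 1) ↦ insertMax x.1 x.2.1 x.2.2 := by
  rintro ⟨τ, c, p⟩ ⟨τ', c', p'⟩ h
  dsimp only at h
  obtain rfl : p = p' := by
    rw [← (insertMax τ c p).1.symm_apply_eq.2 (insertMax_fst_self τ c p).symm, h,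
      (insertMax τ' c' p').1.symm_apply_eq.2 (insertMax_fst_self τ' c' p').symm]
  have hfst (j) := congrArg (fun σ : ColPerm a (m + 1) ↦ σ.1 (p.succAbove j)) h
  have hsnd (j) := congrArg (fun σ : ColPerm a (m + 1) ↦ σ.2 j) h
  simp only [insertMax_fst_succAbove, Fin.castSucc_inj] at hfst
  have hc : c = c' := by simpa using hsnd p
  have hcol : τ.2 = τ'.2 := funext fun j ↦ by simpa using hsnd (p.succAbove j)
  rw [Prod.ext (Equiv.ext hfst) hcol, hc]

lemma insertMax_bijective :
    Function.Bijective fun x : ColPerm a m × Fin a × Fin (m + 1) ↦ insertMax x.1 x.2.1 x.2.2 := by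
  rw [Fintype.bijective_iff_injective_and_card]
  refine ⟨insertMax_injective, ?_⟩
  simp only [Fintype.card_prod, Fintype.card_perm, Fintype.card_fun, Fintype.card_fin,
    Nat.factorial_succ, pow_succ]
  ring

lemma sum_eq_sum_insertMax {M : Type*} [AddCommMonoid M] (f : ColPerm a (m + 1) → M) :
    ∑ σ, f σ = ∑ τ : ColPerm a m, ∑ c, ∑ p, f (insertMax τ c p) := by
  rw [← Fintype.sum_bijective _ insertMax_bijective _ f fun _ ↦ rfl, Fintype.sum_prod_type]
  exact sum_congr rfl fun τ _ ↦ Fintype.sum_prod_type _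

section Window

variable {n : ℕ} [NeZero a]

lemma wval_zero (σ : ColPerm a n) : wval σ 0 = (0, 0) := dif_neg (by omega)

lemma wval_of_lt {σ : ColPerm a n} {i : ℕ} (h : n < i) : wval σ i = (0, 0) := dif_neg (by omega)

lemma wval_succ (σ : ColPerm a n) (j : Fin n) :
    wval σ ((j : ℕ) + 1) = (σ.2 j, (σ.1 j : ℕ) + 1) := by
  simp [wval]

lemma wval_snd_le (σ : ColPerm a n) (i : ℕ) : (wval σ i).2 ≤ n := by
  unfold wval
  split_ifs <;> simp

variable (τ : ColPerm a m) (c : Fin a) (p : Fin (m + 1))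

lemma wval_insertMax_of_le {i : ℕ} (hi : i ≤ p) : wval (insertMax τ c p) i = wval τ i := by
  cases i with
  | zero => simp [wval_zero]
  | succ j =>
    have hj : j < m := by omega
    have hp : p.succAbove ⟨j, hj⟩ = Fin.castSucc ⟨j, hj⟩ :=
      Fin.succAbove_of_castSucc_lt _ _ (by simp [Fin.lt_def]; omega)
    rw [show j = ((⟨j, hj⟩ : Fin m) : ℕ) from rfl, wval_succ, ← Fin.val_castSucc, ← hp, wval_succ]
    simp

lemma wval_insertMax_self : wval (insertMax τ c p) (p + 1) = (c, m + 1) := by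
  simp [wval_succ]

lemma wval_insertMax_of_gt {i : ℕ} (hi : p < i) : wval (insertMax τ c p) (i + 1) = wval τ i := by
  rcases le_or_gt i m with him | him
  · obtain ⟨j, rfl⟩ : ∃ j, i = j + 1 := ⟨i - 1, by omega⟩
    have hj : j < m := by omega
    have hp : p.succAbove ⟨j, hj⟩ = Fin.succ ⟨j, hj⟩ :=
      Fin.succAbove_of_le_castSucc _ _ (by simp [Fin.le_def]; omega)
    rw [show j = ((⟨j, hj⟩ : Fin m) : ℕ) from rfl, wval_succ, ← Fin.val_succ, ← hp, wval_succ]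
    simp
  · rw [wval_of_lt him, wval_of_lt (by omega)]

end Window

section Descents

variable [NeZero a] (L : Finset (Fin a))

/-- Reducible, so that `desL L σ` is definitionally `#{i ∈ range n | descentWord L σ i}`. -/
abbrev descentWord {n : ℕ} (σ : ColPerm a n) (i : ℕ) : Prop :=
  rkL L (wval σ (i + 1)) < rkL L (wval σ i)

lemma desL_le {n : ℕ} (σ : ColPerm a n) : desL L σ ≤ n :=
  (card_filter_le _ _).trans (card_range n).le

variable (τ : ColPerm a m) (c : Fin a) (p : Fin (m + 1))

lemma splitsAt_descentWord_insertMax :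
    SplitsAt (descentWord L τ) (descentWord L (insertMax τ c p)) p (c ∈ L) where
  lt i hi := by
    rw [descentWord, descentWord, wval_insertMax_of_le _ _ _ hi, wval_insertMax_of_le _ _ _ hi.le]
  self := by
    rw [descentWord, wval_insertMax_self, wval_insertMax_of_le _ _ _ le_rfl]
    exact rkL_mk_succ_lt_rkL_iff L (wval_snd_le τ _) c
  succ := by
    rw [descentWord, wval_insertMax_of_gt _ _ _ (Nat.lt_succ_self _), wval_insertMax_self]
    exact rkL_lt_rkL_mk_succ_iff L (wval_snd_le τ _) c
  gt i hi := by
    rw [descentWord, descentWord, wval_insertMax_of_gt _ _ _ (by omega),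
      wval_insertMax_of_gt _ _ _ hi]

lemma desL_insertMax : desL L (insertMax τ c p) = desL L τ +
    if (if c ∈ L then desL L τ else desL L τ + 1) ≤ slotLabel (descentWord L τ) m p
    then 1 else 0 :=
  (splitsAt_descentWord_insertMax L τ c p).card_filter_range_succ p.is_le

lemma rmajL_insertMax : rmajL L (insertMax τ c p) =
    rmajL L τ + (if c ∈ L then 1 else 0) + slotLabel (descentWord L τ) m p :=
  (splitsAt_descentWord_insertMax L τ c p).sum_filter_range_succ p.is_le

end Descents

section Generating

variable [NeZero a] (L : Finset (Fin a)) {R : Type*} [CommRing R] (q t : R)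

lemma one_sub_mul_sum_insertMax_color (τ : ColPerm a m) (c : Fin a) :
    (1 - q) * ∑ p, q ^ rmajL L (insertMax τ c p) * t ^ desL L (insertMax τ c p) =
      if c ∈ L then
        q ^ (rmajL L τ + 1) * t ^ desL L τ *
          (1 - q ^ desL L τ + (q ^ desL L τ - q ^ (m + 1)) * t)
      else
        q ^ rmajL L τ * t ^ desL L τ *
          (1 - q ^ (desL L τ + 1) + (q ^ (desL L τ + 1) - q ^ (m + 1)) * t) := by
  simp only [rmajL_insertMax, desL_insertMax]
  set r := rmajL L τ
  set d := desL L τ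
  set e := if c ∈ L then 1 else 0 with he
  set θ := if c ∈ L then d else d + 1 with hθ
  have hθm : θ ≤ m + 1 := by
    have : d ≤ m := desL_le L τ
    rw [hθ]
    split_ifs <;> omega
  rw [Fin.sum_univ_eq_sum_range (fun p ↦ q ^ (r + e + slotLabel (descentWord L τ) m p) *
      t ^ (d + if θ ≤ slotLabel (descentWord L τ) m p then 1 else 0)),
    sum_range_slotLabel (fun i ↦ q ^ (r + e + i) * t ^ (d + if θ ≤ i then 1 else 0)),
    one_sub_mul_sum_range_pow_mul_pow_ite _ _ _ _ hθm, he, hθ]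
  split_ifs <;> rfl

lemma one_sub_mul_sum_insertMax (τ : ColPerm a m) :
    (1 - q) * ∑ c, ∑ p, q ^ rmajL L (insertMax τ c p) * t ^ desL L (insertMax τ c p) =
      (a - (1 - q) * #L) * (1 - q ^ (m + 1) * t) * (q ^ rmajL L τ * t ^ desL L τ) -
        a * q * (1 - t) * (q ^ (rmajL L τ + desL L τ) * t ^ desL L τ) := by
  have hcard : (#L : R) + #Lᶜ = a := by
    rw [← Nat.cast_add, card_add_card_compl, Fintype.card_fin]
  rw [mul_sum, sum_congr rfl fun c _ ↦ one_sub_mul_sum_insertMax_color L q t τ c, sum_ite,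
    sum_const, sum_const, filter_mem_eq_inter, univ_inter, nsmul_eq_mul, nsmul_eq_mul,
    show ({c | c ∉ L} : Finset (Fin a)) = Lᶜ by ext; simp]
  linear_combination (q ^ rmajL L τ * t ^ desL L τ *
    (1 - q ^ (desL L τ + 1) + (q ^ (desL L τ + 1) - q ^ (m + 1)) * t)) * hcard

end Generating

end ColPerm

lemma Amaj_eq_sum (a n : ℕ) [NeZero a] (L : Finset (Fin a)) :
    Amaj a n L = ∑ σ : ColPerm a n, C (X : ℚ[X]) ^ rmajL L σ * X ^ desL L σ := by
  simp only [Amaj, C_pow]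

lemma Amaj_comp_C_X_mul_X (a n : ℕ) [NeZero a] (L : Finset (Fin a)) :
    (Amaj a n L).comp (C X * X) =
      ∑ σ : ColPerm a n, C (X : ℚ[X]) ^ (rmajL L σ + desL L σ) * X ^ desL L σ := by
  rw [Amaj_eq_sum, Polynomial.sum_comp]
  refine sum_congr rfl fun σ _ ↦ ?_
  rw [mul_comp, pow_comp, pow_comp, C_comp, X_comp, pow_add]
  ring

/-- The functional recurrence
`(1−q) A_{a,ℓ,n}(t,q) = (a − (1−q)ℓ)(1 − t qⁿ) A_{a,ℓ,n-1}(t,q) − a q (1−t) A_{a,ℓ,n-1}(tq,q)`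
for `n > 0`; here `t` is the outer variable, `q` the inner one, `ℓ = |L|`, and
substituting `tq` for `t` is polynomial composition in the outer variable. -/
theorem Amaj_functional_recurrence (a n : ℕ) [NeZero a] (L : Finset (Fin a)) (hn : 1 ≤ n) :
    Polynomial.C (1 - (X : Polynomial ℚ)) * Amaj a n L =
      Polynomial.C ((a : Polynomial ℚ) - (1 - X) * (L.card : Polynomial ℚ)) *
          (1 - Polynomial.C ((X : Polynomial ℚ) ^ n) * X) * Amaj a (n - 1) L -
      Polynomial.C ((a : Polynomial ℚ) * X) * (1 - X) *
          (Amaj a (n - 1) L).comp (Polynomial.C (X : Polynomial ℚ) * X) := by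
  obtain ⟨m, rfl⟩ : ∃ m, n = m + 1 := ⟨n - 1, by omega⟩
  rw [Nat.add_sub_cancel, Amaj_comp_C_X_mul_X, Amaj_eq_sum, Amaj_eq_sum,
    ColPerm.sum_eq_sum_insertMax]
  simp only [map_sub, map_mul, map_one, map_pow, map_natCast]
  rw [mul_sum, mul_sum, mul_sum, ← sum_sub_distrib]
  exact sum_congr rfl fun τ _ ↦ ColPerm.one_sub_mul_sum_insertMax L _ _ τ
end

section
/- Generalized Carlitz quotient formula: for all integers n > 0, a > 0, 0 ≤ ℓ ≤ a, one has the formal power series identity A_{a,ℓ,n}(t,q) / ((1−t)(1−tq)⋯(1−tq^n)) = Σ_{s≥0} t^s (a[s+1]_q − ℓ)^n in the ring of formal power series in t over ℚ(q) (equivalently, A_{a,ℓ,n}(t,q) = (t;q)_{n+1} · Σ_{s≥0} t^s (a[s+1]_q − ℓ)^n). -/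
open Finset Polynomial
open scoped Classical

/-!
Expanding `(a[s+1]_q - ℓ)^n` gives a sum over words `g : Fin n → Fin a × ℕ` (a colour and a
height for each absolute value `j + 1`) with heights at most `s`, where a letter whose colour lies
in `L` may not have height `0`, weighted by `q` to the sum of the heights. Sorting the letters by
(height, `<_L`-rank) yields a coloured permutation `σ` along whose window the heights weakly
increase, strictly across every `L`-descent (a descent at position `0` is a first letter coloured
in `L`, which needs a positive height). Subtracting from each height the number of descents before
its position leaves a weakly increasing tuple `λ` with entries at most `s - des_L σ`, and the
heights add up to `rmaj_{L,n} σ + Σ λ`. Such tuples are counted by the coefficient of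
`t^(s - des_L σ)` in `∏_{j ≤ n} (1 - q^j t)⁻¹`.
-/

namespace Fin

theorem monotone_cons_iff {α : Type*} [Preorder α] {n : ℕ} {x : α} {f : Fin n → α} :
    Monotone (Fin.cons x f : Fin (n + 1) → α) ↔ (∀ j, x ≤ f j) ∧ Monotone f := by
  simpa only [monotone_iff_forall_lt, Relator.LiftFun] using Fin.liftFun_cons (α := α) (· ≤ ·)

end Fin

namespace Carlitz

section Descents

variable {n : ℕ} {β : Type*} [LinearOrder β] (r : Fin (n + 1) → β)

def descentsBefore (p : Fin (n + 1)) : ℕ :=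
  #{i : Fin n | i.castSucc < p ∧ r i.succ < r i.castSucc}

@[simp]
theorem descentsBefore_zero : descentsBefore r 0 = 0 := by
  simp [descentsBefore]

theorem descentsBefore_succ (i : Fin n) :
    descentsBefore r i.succ =
      descentsBefore r i.castSucc + if r i.succ < r i.castSucc then 1 else 0 := by
  rw [descentsBefore, descentsBefore, card_filter, card_filter, ← sum_add_distrib.trans
    (congrArg _ (Fintype.sum_ite_eq' i fun j => if r j.succ < r j.castSucc then 1 else 0))]
  refine sum_congr rfl fun j _ => ?_
  rcases lt_trichotomy j i with h | rfl | h
  · simp [h, h.ne, Fin.castSucc_lt_succ_iff.2 h.le]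
  · simp
  · simp [h.ne', Fin.castSucc_lt_succ_iff, h.not_ge, h.not_gt]

theorem descentsBefore_mono : Monotone (descentsBefore r) := fun _ _ hpq =>
  card_le_card (monotone_filter_right _ fun _ _ h => ⟨h.1.trans_le hpq, h.2⟩)

theorem descentsBefore_le_of_strictMono_toLex {B : Fin (n + 1) → ℕ}
    (hB : StrictMono fun p => toLex (B p, r p)) (p : Fin (n + 1)) :
    descentsBefore r p ≤ B p := by
  induction p using Fin.induction with
  | zero => simp
  | succ i ih =>
    have hstep := Prod.Lex.toLex_lt_toLex.1 (hB i.castSucc_lt_succ)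
    rw [descentsBefore_succ]
    split_ifs with hdes
    · rcases hstep with h | ⟨-, h⟩
      · omega
      · exact absurd h hdes.not_gt
    · rcases hstep with h | ⟨h, -⟩ <;> omega

theorem strictMono_toLex_descentsBefore_add_iff (hr : ∀ i : Fin n, r i.castSucc ≠ r i.succ)
    {l : Fin (n + 1) → ℕ} :
    StrictMono (fun p => toLex (descentsBefore r p + l p, r p)) ↔ Monotone l := by
  rw [Fin.strictMono_iff_lt_succ, Fin.monotone_iff_le_succ]
  refine forall_congr' fun i => ?_
  rw [Prod.Lex.toLex_lt_toLex, descentsBefore_succ]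
  rcases (hr i).lt_or_gt with h | h
  · simp only [h.not_gt, if_false, h, and_true]
    omega
  · simp only [h, if_true, h.not_gt, and_false, or_false]
    omega

end Descents

section MonotoneTuples

variable {R : Type*} [CommSemiring R] (q : R)

def monotoneTuples (m r : ℕ) : Finset (Fin m → ℕ) :=
  {f ∈ Fintype.piFinset fun _ => range (r + 1) | Monotone f}

theorem mem_monotoneTuples {m r : ℕ} {f : Fin m → ℕ} :
    f ∈ monotoneTuples m r ↔ (∀ i, f i ≤ r) ∧ Monotone f := by
  simp [monotoneTuples]

theorem cons_add_mem_monotoneTuples_iff {m r k : ℕ} {f : Fin m → ℕ} :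
    (Fin.cons k (fun i => k + f i) : Fin (m + 1) → ℕ) ∈ monotoneTuples (m + 1) r ↔
      k ≤ r ∧ f ∈ monotoneTuples m (r - k) := by
  simp only [mem_monotoneTuples, Fin.monotone_cons_iff, Fin.forall_fin_succ, Fin.cons_zero,
    Fin.cons_succ, le_add_iff_nonneg_right, Nat.zero_le, implies_true, true_and]
  have : Monotone (fun i => k + f i) ↔ Monotone f :=
    ⟨fun h _ _ hij => Nat.le_of_add_le_add_left (h hij), fun h => h.const_add k⟩
  rw [this]
  constructor
  · rintro ⟨⟨hk, hf⟩, hmono⟩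
    exact ⟨hk, fun i => by have := hf i; omega, hmono⟩
  · rintro ⟨hk, hf, hmono⟩
    exact ⟨⟨hk, fun i => by have := hf i; omega⟩, hmono⟩

theorem cons_add_sub_of_monotone {m : ℕ} {f : Fin (m + 1) → ℕ} (hf : Monotone f) :
    (Fin.cons (f 0) fun i => f 0 + (f i.succ - f 0) : Fin (m + 1) → ℕ) = f := by
  funext i
  cases i using Fin.cases with
  | zero => rfl
  | succ i => simp [Nat.add_sub_cancel' (hf (Fin.zero_le i.succ))]

def monotoneTupleSum (m r : ℕ) : R :=
  ∑ f ∈ monotoneTuples m r, q ^ ∑ i, f i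

theorem monotoneTupleSum_zero (r : ℕ) : monotoneTupleSum q 0 r = 1 := by
  simp [monotoneTupleSum, monotoneTuples, Subsingleton.monotone]

theorem monotoneTupleSum_succ (m r : ℕ) :
    monotoneTupleSum q (m + 1) r =
      ∑ k ∈ range (r + 1), q ^ ((m + 1) * k) * monotoneTupleSum q m (r - k) := by
  simp only [monotoneTupleSum, mul_sum, ← pow_add]
  rw [sum_sigma']
  symm
  refine sum_nbij' (fun p => Fin.cons p.1 fun i => p.1 + p.2 i)
    (fun f => ⟨f 0, fun i => f i.succ - f 0⟩) ?_ ?_ ?_ ?_ ?_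
  · rintro ⟨k, f⟩ hp
    rw [mem_sigma, mem_range, Nat.lt_succ_iff] at hp
    exact cons_add_mem_monotoneTuples_iff.2 hp
  · intro f hf
    rw [← cons_add_sub_of_monotone (mem_monotoneTuples.1 hf).2] at hf
    rw [mem_sigma, mem_range, Nat.lt_succ_iff]
    exact cons_add_mem_monotoneTuples_iff.1 hf
  · rintro ⟨k, f⟩ -
    simp
  · intro f hf
    exact cons_add_sub_of_monotone (mem_monotoneTuples.1 hf).2
  · rintro ⟨k, f⟩ -
    simp only [Fin.sum_univ_succ, Fin.cons_zero, Fin.cons_succ, sum_add_distrib, sum_const,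
      card_univ, Fintype.card_fin, smul_eq_mul]
    ring_nf

theorem coeff_prod_mk_pow (m r : ℕ) :
    PowerSeries.coeff r (∏ j ∈ range (m + 1), PowerSeries.mk fun k => (q ^ j) ^ k) =
      monotoneTupleSum q m r := by
  induction m generalizing r with
  | zero => simp [monotoneTupleSum_zero]
  | succ m ih =>
    rw [prod_range_succ, mul_comm, PowerSeries.coeff_mul, Nat.sum_antidiagonal_eq_sum_range_succ
      (fun i j => PowerSeries.coeff i _ * PowerSeries.coeff j _), monotoneTupleSum_succ]
    simp only [PowerSeries.coeff_mk, ih, pow_mul]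

end MonotoneTuples

section Window

variable {a n : ℕ} (L : Finset (Fin a))

theorem rkL_succ (c : Fin a) (v : ℕ) :
    rkL L (c, v + 1) = if c ∈ L then -(((v : ℤ) + 1) * a + c) else ((v : ℤ) + 1) * a + c := by
  simp [rkL]

theorem rkL_succ_ne_zero (c : Fin a) (v : ℕ) : rkL L (c, v + 1) ≠ 0 := by
  have : (0 : ℤ) < ((v : ℤ) + 1) * a + c := by have := c.pos; positivity
  rw [rkL_succ]; split_ifs <;> omega

theorem rkL_succ_neg_iff (c : Fin a) (v : ℕ) : rkL L (c, v + 1) < 0 ↔ c ∈ L := by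
  have : (0 : ℤ) < ((v : ℤ) + 1) * a + c := by have := c.pos; positivity
  rw [rkL_succ]; split_ifs with h <;> simp [h] <;> omega

theorem toLex_zero_lt_iff (c : Fin a) (h v : ℕ) :
    toLex ((0 : ℕ), (0 : ℤ)) < toLex (h, rkL L (c, v + 1)) ↔ ¬(c ∈ L ∧ h = 0) := by
  have hne := rkL_succ_ne_zero L c v
  rw [Prod.Lex.toLex_lt_toLex, ← rkL_succ_neg_iff L c v]
  omega

theorem eq_of_rkL_succ_eq {c d : Fin a} {v w : ℕ} (h : rkL L (c, v + 1) = rkL L (d, w + 1)) :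
    v = w := by
  have hc : (c : ℤ) < a := by exact_mod_cast c.isLt
  have hd : (d : ℤ) < a := by exact_mod_cast d.isLt
  have hpos : (0 : ℤ) < a := by have := c.pos; positivity
  have key : ((v : ℤ) + 1) * a + c = ((w : ℤ) + 1) * a + d := by
    rw [rkL_succ, rkL_succ] at h
    split_ifs at h <;> first | omega | nlinarith
  rcases lt_trichotomy v w with hvw | rfl | hvw
  · have : (v : ℤ) + 1 ≤ w := by exact_mod_cast hvw
    nlinarith
  · rfl
  · have : (w : ℤ) + 1 ≤ v := by exact_mod_cast hvw
    nlinarith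

def windowRank (σ : ColPerm a n) : Fin (n + 1) → ℤ :=
  Fin.cons 0 fun i => rkL L (σ.2 i, σ.1 i + 1)

variable (σ : ColPerm a n)

theorem windowRank_injective : Function.Injective (windowRank L σ) := by
  refine Fin.cons_injective_iff.2 ⟨fun ⟨_, hi⟩ => rkL_succ_ne_zero L _ _ hi, fun _ _ h => ?_⟩
  exact σ.1.injective (Fin.ext (eq_of_rkL_succ_eq L h))

theorem strictMono_toLex_windowRank_iff {l : Fin (n + 1) → ℕ} :
    StrictMono (fun p => toLex (descentsBefore (windowRank L σ) p + l p, windowRank L σ p)) ↔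
      Monotone l :=
  strictMono_toLex_descentsBefore_add_iff _
    fun i => (windowRank_injective L σ).ne i.castSucc_lt_succ.ne

theorem strictMono_toLex_windowRank_cons {l : Fin n → ℕ} (hl : Monotone l) :
    StrictMono fun p =>
      toLex (descentsBefore (windowRank L σ) p + (Fin.cons 0 l : Fin (n + 1) → ℕ) p,
        windowRank L σ p) :=
  (strictMono_toLex_windowRank_iff L σ).2 <|
    Fin.monotone_cons_iff.2 ⟨fun _ => Nat.zero_le _, hl⟩

variable [NeZero a]

theorem rkL_wval (p : Fin (n + 1)) : rkL L (wval σ p) = windowRank L σ p := by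
  cases p using Fin.cases with
  | zero => simp [wval, rkL, windowRank]
  | succ i => simp [wval, windowRank]

theorem DesL_eq_map :
    DesL L σ =
      ({i | windowRank L σ i.succ < windowRank L σ i.castSucc} : Finset (Fin n)).map
        Fin.valEmbedding := by
  ext d
  simp only [DesL, mem_filter, mem_range, mem_map, mem_univ, true_and, Fin.valEmbedding_apply]
  constructor
  · rintro ⟨hd, h⟩
    refine ⟨⟨d, hd⟩, ?_, rfl⟩
    simpa [← rkL_wval] using h
  · rintro ⟨i, h, rfl⟩
    refine ⟨i.isLt, ?_⟩
    simpa [← rkL_wval] using h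

theorem desL_eq_descentsBefore_last :
    desL L σ = descentsBefore (windowRank L σ) (Fin.last n) := by
  simp [desL, DesL_eq_map, descentsBefore, Fin.castSucc_lt_last]

theorem rmajL_eq_sum_descentsBefore :
    rmajL L σ = ∑ i : Fin n, descentsBefore (windowRank L σ) i.succ := by
  have hcard (i : Fin n) : n - i = #{p : Fin n | i ≤ p} := by
    rw [← Fin.card_Ici]; congr; ext; simp
  simp only [rmajL, DesL_eq_map, sum_map, Fin.valEmbedding_apply, hcard, descentsBefore,
    Fin.castSucc_lt_succ_iff, card_filter, sum_filter]
  rw [sum_comm]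
  exact sum_congr rfl fun i _ => by split_ifs with h <;> simp [h]

end Window

section Bijection

variable {a n : ℕ} (L : Finset (Fin a))

def letters (s : ℕ) : Finset (Fin a × ℕ) :=
  {x ∈ univ ×ˢ range (s + 1) | ¬(x.1 ∈ L ∧ x.2 = 0)}

theorem mem_letters {s : ℕ} {x : Fin a × ℕ} :
    x ∈ letters L s ↔ x.2 ≤ s ∧ ¬(x.1 ∈ L ∧ x.2 = 0) := by
  simp [letters]

theorem sum_pow_letters (s : ℕ) :
    ∑ x ∈ letters L s, (X : ℚ[X]) ^ x.2 =
      (a : ℚ[X]) * (∑ j ∈ range (s + 1), X ^ j) - (L.card : ℚ[X]) := by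
  have hall : ∑ x ∈ (univ : Finset (Fin a)) ×ˢ range (s + 1), (X : ℚ[X]) ^ x.2 =
      (a : ℚ[X]) * ∑ j ∈ range (s + 1), X ^ j := by
    simp [sum_product, nsmul_eq_mul]
  have hexcluded : ∑ x ∈ (univ : Finset (Fin a)) ×ˢ range (s + 1) with x.1 ∈ L ∧ x.2 = 0,
      (X : ℚ[X]) ^ x.2 = (L.card : ℚ[X]) := by
    have : {x ∈ (univ : Finset (Fin a)) ×ˢ range (s + 1) | x.1 ∈ L ∧ x.2 = 0} =
        L ×ˢ {0} := by
      ext ⟨c, v⟩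
      simp only [mem_filter, mem_product, mem_univ, mem_range, mem_singleton, true_and]
      exact ⟨fun h => h.2, fun h => ⟨by omega, h⟩⟩
    simp [this]
  rw [letters, ← hall, ← hexcluded]
  exact eq_sub_of_add_eq (sum_filter_not_add_sum_filter _ _ _)

def wordKey (g : Fin n → Fin a × ℕ) (j : Fin n) : ℕ ×ₗ ℤ :=
  toLex ((g j).2, rkL L ((g j).1, j + 1))

theorem wordKey_injective (g : Fin n → Fin a × ℕ) : Function.Injective (wordKey L g) :=
  fun _ _ h => Fin.ext (eq_of_rkL_succ_eq L (congrArg (fun k => (ofLex k).2) h))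

noncomputable def sortPerm (g : Fin n → Fin a × ℕ) : Equiv.Perm (Fin n) :=
  Tuple.sort (wordKey L g)

noncomputable def colPermOfWord (g : Fin n → Fin a × ℕ) : ColPerm a n :=
  (sortPerm L g, fun i => (g (sortPerm L g i)).1)

-- Height `0` at position `0`, where `windowRank` puts the letter `0`: a word is admissible exactly
-- when the keys then increase strictly from position `0` on.
noncomputable def sortedHeight (g : Fin n → Fin a × ℕ) : Fin (n + 1) → ℕ :=
  Fin.cons 0 fun i => (g (sortPerm L g i)).2

theorem strictMono_toLex_sortedHeight {s : ℕ} {g : Fin n → Fin a × ℕ}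
    (hg : ∀ j, g j ∈ letters L s) :
    StrictMono fun p => toLex (sortedHeight L g p, windowRank L (colPermOfWord L g) p) := by
  have hcons : (fun p => toLex (sortedHeight L g p, windowRank L (colPermOfWord L g) p)) =
      Fin.cons (toLex (0, 0)) (wordKey L g ∘ sortPerm L g) := by
    funext p
    cases p using Fin.cases <;> rfl
  rw [hcons, Fin.strictMono_cons]
  exact ⟨fun j => (toLex_zero_lt_iff L _ _ _).2 ((mem_letters L).1 (hg _)).2,
    (Tuple.monotone_sort _).strictMono_of_injective
      ((wordKey_injective L g).comp (sortPerm L g).injective)⟩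

theorem descentsBefore_le_sortedHeight {s : ℕ} {g : Fin n → Fin a × ℕ}
    (hg : ∀ j, g j ∈ letters L s) (p : Fin (n + 1)) :
    descentsBefore (windowRank L (colPermOfWord L g)) p ≤ sortedHeight L g p :=
  descentsBefore_le_of_strictMono_toLex _ (strictMono_toLex_sortedHeight L hg) p

noncomputable def pairOfWord (g : Fin n → Fin a × ℕ) : Σ _ : ColPerm a n, Fin n → ℕ :=
  ⟨colPermOfWord L g, fun i =>
    sortedHeight L g i.succ - descentsBefore (windowRank L (colPermOfWord L g)) i.succ⟩

def wordOfPair (σ : ColPerm a n) (l : Fin n → ℕ) (j : Fin n) : Fin a × ℕ :=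
  (σ.2 (σ.1.symm j), descentsBefore (windowRank L σ) (σ.1.symm j).succ + l (σ.1.symm j))

theorem wordOfPair_apply_perm (σ : ColPerm a n) (l : Fin n → ℕ) (i : Fin n) :
    wordOfPair L σ l (σ.1 i) = (σ.2 i, descentsBefore (windowRank L σ) i.succ + l i) := by
  simp [wordOfPair]

theorem strictMono_wordKey_wordOfPair_comp (σ : ColPerm a n) {l : Fin n → ℕ}
    (hl : Monotone l) :
    StrictMono (wordKey L (wordOfPair L σ l) ∘ σ.1) := by
  convert (strictMono_toLex_windowRank_cons L σ hl).comp (Fin.strictMono_succ (n := n)) using 1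
  funext i
  simp [wordKey, wordOfPair_apply_perm, windowRank]

theorem sortPerm_wordOfPair (σ : ColPerm a n) {l : Fin n → ℕ} (hl : Monotone l) :
    sortPerm L (wordOfPair L σ l) = σ.1 := by
  have h := strictMono_wordKey_wordOfPair_comp L σ hl
  exact (Tuple.eq_sort_iff.2 ⟨h.monotone, fun i j hij he => absurd he (h hij).ne⟩).symm

theorem pairOfWord_wordOfPair (σ : ColPerm a n) {l : Fin n → ℕ} (hl : Monotone l) :
    pairOfWord L (wordOfPair L σ l) = ⟨σ, l⟩ := by
  have hπ := sortPerm_wordOfPair L σ hl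
  have hσ : colPermOfWord L (wordOfPair L σ l) = σ := by
    ext i <;> simp [colPermOfWord, hπ, wordOfPair_apply_perm]
  have hB (i : Fin n) :
      sortedHeight L (wordOfPair L σ l) i.succ =
        descentsBefore (windowRank L σ) i.succ + l i := by
    simp [sortedHeight, hπ, wordOfPair_apply_perm]
  simp only [pairOfWord, hσ, hB, Nat.add_sub_cancel_left]

theorem wordOfPair_pairOfWord {s : ℕ} {g : Fin n → Fin a × ℕ}
    (hg : ∀ j, g j ∈ letters L s) :
    wordOfPair L (pairOfWord L g).1 (pairOfWord L g).2 = g := by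
  funext j
  obtain ⟨i, rfl⟩ := (sortPerm L g).surjective j
  have hle := descentsBefore_le_sortedHeight L hg i.succ
  rw [show sortPerm L g = (pairOfWord L g).1.1 from rfl, wordOfPair_apply_perm]
  simp only [pairOfWord, Nat.add_sub_cancel' hle]
  rfl

variable [NeZero a]

theorem wordOfPair_mem_letters {s : ℕ} {σ : ColPerm a n} {l : Fin n → ℕ}
    (hσ : desL L σ ≤ s) (hl : l ∈ monotoneTuples n (s - desL L σ)) (j : Fin n) :
    wordOfPair L σ l j ∈ letters L s := by
  obtain ⟨hbound, hmono⟩ := mem_monotoneTuples.1 hl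
  obtain ⟨i, rfl⟩ := σ.1.surjective j
  rw [wordOfPair_apply_perm, mem_letters]
  constructor
  · have hdes := descentsBefore_mono (windowRank L σ) (Fin.le_last i.succ)
    rw [← desL_eq_descentsBefore_last] at hdes
    have := hbound i
    dsimp only
    omega
  · rw [← toLex_zero_lt_iff L _ _ (σ.1 i)]
    simpa [windowRank] using strictMono_toLex_windowRank_cons L σ hmono (Fin.succ_pos i)

theorem pairOfWord_mem {s : ℕ} {g : Fin n → Fin a × ℕ} (hg : ∀ j, g j ∈ letters L s) :
    desL L (pairOfWord L g).1 ≤ s ∧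
      (pairOfWord L g).2 ∈ monotoneTuples n (s - desL L (pairOfWord L g).1) := by
  have hle := descentsBefore_le_sortedHeight L hg
  have hBs (p : Fin (n + 1)) : sortedHeight L g p ≤ s := by
    cases p using Fin.cases with
    | zero => simp [sortedHeight]
    | succ i => exact ((mem_letters L).1 (hg _)).1
  have hmono : Monotone fun p =>
      sortedHeight L g p - descentsBefore (windowRank L (colPermOfWord L g)) p := by
    rw [← strictMono_toLex_windowRank_iff L (colPermOfWord L g)]
    simpa only [Nat.add_sub_cancel' (hle _)] using strictMono_toLex_sortedHeight L hg
  have hlast := hBs (Fin.last n)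
  have hdes := hle (Fin.last n)
  simp only [pairOfWord, desL_eq_descentsBefore_last] at hdes ⊢
  refine ⟨hdes.trans hlast,
    mem_monotoneTuples.2 ⟨fun i => ?_, hmono.comp Fin.strictMono_succ.monotone⟩⟩
  have := hmono (Fin.le_last i.succ)
  dsimp only at this
  omega

theorem sum_height_wordOfPair (σ : ColPerm a n) (l : Fin n → ℕ) :
    ∑ j, (wordOfPair L σ l j).2 = rmajL L σ + ∑ i, l i := by
  rw [← Equiv.sum_comp σ.1, rmajL_eq_sum_descentsBefore, ← sum_add_distrib]
  simp only [wordOfPair_apply_perm]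

end Bijection

section Counting

variable {a n : ℕ} [NeZero a] (L : Finset (Fin a))

theorem pow_sum_pow_eq_sum_piFinset {R α : Type*} [CommSemiring R] (q : R) (S : Finset α)
    (w : α → ℕ) : (∑ x ∈ S, q ^ w x) ^ n = ∑ g ∈ Fintype.piFinset fun _ : Fin n => S,
      q ^ ∑ j, w (g j) := by
  rw [← Fin.prod_const, prod_univ_sum]
  simp [prod_pow_eq_pow_sum]

theorem sum_wordOfPair_eq_sum_piFinset {M : Type*} [AddCommMonoid M]
    (f : (Fin n → Fin a × ℕ) → M) (s : ℕ) :
    ∑ p ∈ ({σ | desL L σ ≤ s} : Finset (ColPerm a n)).sigma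
        (fun σ => monotoneTuples n (s - desL L σ)), f (wordOfPair L p.1 p.2) =
      ∑ g ∈ Fintype.piFinset fun _ : Fin n => letters L s, f g := by
  refine sum_nbij' (fun p => wordOfPair L p.1 p.2) (pairOfWord L) ?_ ?_ ?_ ?_ (fun _ _ => rfl)
  · rintro ⟨σ, l⟩ hp
    rw [mem_sigma, mem_filter] at hp
    exact Fintype.mem_piFinset.2 (wordOfPair_mem_letters L hp.1.2 hp.2)
  · intro g hg
    rw [mem_sigma, mem_filter]
    have := pairOfWord_mem L (Fintype.mem_piFinset.1 hg)
    exact ⟨⟨mem_univ _, this.1⟩, this.2⟩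
  · rintro ⟨σ, l⟩ hp
    rw [mem_sigma] at hp
    exact pairOfWord_wordOfPair L σ (mem_monotoneTuples.1 hp.2).2
  · intro g hg
    exact wordOfPair_pairOfWord L (Fintype.mem_piFinset.1 hg)

theorem pow_eq_sum_rmajL_mul_monotoneTupleSum (s : ℕ) :
    ((a : ℚ[X]) * (∑ j ∈ range (s + 1), X ^ j) - (L.card : ℚ[X])) ^ n =
      ∑ σ : ColPerm a n, if desL L σ ≤ s then
        X ^ rmajL L σ * monotoneTupleSum X n (s - desL L σ) else 0 := by
  rw [← sum_pow_letters, pow_sum_pow_eq_sum_piFinset, ← sum_wordOfPair_eq_sum_piFinset,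
    sum_sigma, ← sum_filter]
  simp only [sum_height_wordOfPair, pow_add, monotoneTupleSum, mul_sum]

theorem mk_pow_eq_Amaj_mul_prod :
    PowerSeries.mk (fun s =>
        ((a : ℚ[X]) * (∑ j ∈ range (s + 1), X ^ j) - (L.card : ℚ[X])) ^ n) =
      (Amaj a n L : PowerSeries ℚ[X]) *
        ∏ j ∈ range (n + 1), PowerSeries.mk fun k => ((X : ℚ[X]) ^ j) ^ k := by
  have hcoe : (Amaj a n L : PowerSeries ℚ[X]) =
      ∑ σ : ColPerm a n, PowerSeries.C (X ^ rmajL L σ) * PowerSeries.X ^ desL L σ := by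
    rw [Amaj, ← Polynomial.coeToPowerSeries.ringHom_apply, map_sum]
    simp [Polynomial.coeToPowerSeries.ringHom_apply]
  refine PowerSeries.ext fun s => ?_
  simp only [PowerSeries.coeff_mk, pow_eq_sum_rmajL_mul_monotoneTupleSum, hcoe, sum_mul, map_sum,
    mul_assoc, PowerSeries.coeff_C_mul, PowerSeries.coeff_X_pow_mul', coeff_prod_mk_pow, mul_ite,
    mul_zero]

end Counting

theorem one_sub_C_mul_X_mul_mk_pow {R : Type*} [CommRing R] (c : R) :
    (1 - PowerSeries.C c * PowerSeries.X) * PowerSeries.mk (fun k => c ^ k) = 1 := by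
  have h := congrArg (PowerSeries.rescale c) (PowerSeries.mk_one_mul_one_sub_eq_one R)
  rw [map_mul, map_sub, map_one, PowerSeries.rescale_X, PowerSeries.rescale_mk] at h
  simpa [mul_comm] using h

end Carlitz

theorem Amaj_quotient_formula_general (a n : ℕ) [NeZero a] (L : Finset (Fin a)) :
    (Amaj a n L : PowerSeries (Polynomial ℚ)) =
      (∏ j ∈ Finset.range (n + 1),
          (1 - PowerSeries.C (R := Polynomial ℚ) (X ^ j) * PowerSeries.X)) *
        PowerSeries.mk (fun s =>
          ((a : Polynomial ℚ) * (∑ j ∈ Finset.range (s + 1), X ^ j) -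
            (L.card : Polynomial ℚ)) ^ n) := by
  rw [Carlitz.mk_pow_eq_Amaj_mul_prod, mul_left_comm, ← prod_mul_distrib,
    prod_eq_one fun j _ => Carlitz.one_sub_C_mul_X_mul_mk_pow _, mul_one]

/-- Generalized Carlitz quotient formula, in the equivalent product form:
`A_{a,ℓ,n}(t,q) = (t;q)_{n+1} · Σ_{s≥0} t^s (a[s+1]_q − ℓ)^n` for `n > 0`, as formal
power series in `t` with coefficients in `ℚ[q]` (so dividing by the unit `(t;q)_{n+1}`
gives `A_{a,ℓ,n}(t,q)/(t;q)_{n+1} = Σ_{s≥0} t^s (a[s+1]_q − ℓ)^n`). -/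
theorem Amaj_quotient_formula (a n : ℕ) [NeZero a] (L : Finset (Fin a)) (hn : 1 ≤ n) :
    (Amaj a n L : PowerSeries (Polynomial ℚ)) =
      (∏ j ∈ Finset.range (n + 1),
          (1 - PowerSeries.C (R := Polynomial ℚ) (X ^ j) * PowerSeries.X)) *
        PowerSeries.mk (fun s =>
          ((a : Polynomial ℚ) * (∑ j ∈ Finset.range (s + 1), X ^ j) -
            (L.card : Polynomial ℚ)) ^ n) :=
  Amaj_quotient_formula_general a n L
end

section
/- The C_a ≀ S_n Eulerian numbers A_{a,ℓ,n,s} = #{σ ∈ C_a≀S_n : des_L(σ) = s} (|L| = ℓ) satisfy the recurrence A_{a,ℓ,n,s} = (a(s+1) − ℓ)·A_{a,ℓ,n-1,s} + (a(n−s) + ℓ)·A_{a,ℓ,n-1,s-1}. -/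
open Finset Polynomial
open scoped Classical

/-- The `C_a ≀ S_n` Eulerian number `A_{a,L,n,s} = #{σ ∈ C_a≀S_n : des_L σ = s}`. -/
noncomputable def Anum (a n s : ℕ) [NeZero a] (L : Finset (Fin a)) : ℕ :=
  (Finset.univ.filter (fun σ : ColPerm a n => desL L σ = s)).card

/-- The `C_a ≀ S_n` Eulerian polynomial `A_{a,L,n}(t) = Σ_{σ ∈ C_a≀S_n} t^{des_L σ}`. -/
noncomputable def Aeul (a n : ℕ) [NeZero a] (L : Finset (Fin a)) : Polynomial ℚ :=
  ∑ σ : ColPerm a n, X ^ desL L σ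

set_option linter.unusedSectionVars false
set_option maxHeartbeats 1000000

namespace AnumAux

variable {a m : ℕ} [NeZero a]

/-- Insert the letter with absolute value `m+1` and color `t` at (0-based) position `p`. -/
def insC (τ : ColPerm a m) (t : Fin a) (p : Fin (m+1)) : ColPerm a (m+1) :=
  ((finSuccEquiv' p).trans ((Equiv.optionCongr τ.1).trans (finSuccEquiv' (Fin.last m)).symm),
   p.insertNth t τ.2)

lemma insC_perm_p (τ : ColPerm a m) (t : Fin a) (p : Fin (m+1)) :
    (insC τ t p).1 p = Fin.last m := by
  simp [insC, finSuccEquiv'_at, finSuccEquiv'_symm_none]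

lemma insC_perm_succAbove (τ : ColPerm a m) (t : Fin a) (p : Fin (m+1)) (j : Fin m) :
    (insC τ t p).1 (p.succAbove j) = (τ.1 j).castSucc := by
  simp [insC, finSuccEquiv'_succAbove, finSuccEquiv'_symm_some, Fin.succAbove_last]

lemma insC_col_p (τ : ColPerm a m) (t : Fin a) (p : Fin (m+1)) :
    (insC τ t p).2 p = t := by
  simp [insC]

lemma insC_col_succAbove (τ : ColPerm a m) (t : Fin a) (p : Fin (m+1)) (j : Fin m) :
    (insC τ t p).2 (p.succAbove j) = τ.2 j := by
  simp [insC]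

lemma wval_insC (τ : ColPerm a m) (t : Fin a) (p : Fin (m+1)) (i : ℕ) :
    wval (insC τ t p) i =
      if i ≤ (p : ℕ) then wval τ i
      else if i = (p : ℕ) + 1 then ((t : Fin a), m + 1)
      else wval τ (i - 1) := by
  have hP : (p : ℕ) ≤ m := Fin.is_le p
  rcases Nat.lt_or_ge i 1 with h0 | h1
  · have : i = 0 := by omega
    subst this
    simp [wval]
  by_cases hle : i ≤ (p : ℕ)
  · have him : i ≤ m := le_trans hle hP
    rw [if_pos hle, wval, dif_pos ⟨h1, by omega⟩, wval, dif_pos ⟨h1, him⟩]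
    have hidx : (⟨i - 1, by omega⟩ : Fin (m+1)) = p.succAbove ⟨i - 1, by omega⟩ := by
      rw [Fin.succAbove_of_castSucc_lt]
      · ext; simp
      · rw [Fin.lt_def]; simp; omega
    rw [hidx, insC_perm_succAbove, insC_col_succAbove]
    simp
  · rw [if_neg hle]
    by_cases heq : i = (p : ℕ) + 1
    · subst heq
      rw [if_pos rfl, wval, dif_pos ⟨by omega, by omega⟩]
      have hidx : (⟨(p : ℕ) + 1 - 1, by omega⟩ : Fin (m+1)) = p := by ext; simp
      rw [hidx, insC_perm_p, insC_col_p]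
      simp [Fin.val_last]
    · rw [if_neg heq]
      by_cases hub : i ≤ m + 1
      · have h2 : (p : ℕ) + 2 ≤ i := by omega
        rw [wval, dif_pos ⟨h1, hub⟩, wval, dif_pos ⟨by omega, by omega⟩]
        have hidx : (⟨i - 1, by omega⟩ : Fin (m+1)) = p.succAbove ⟨i - 2, by omega⟩ := by
          rw [Fin.succAbove_of_le_castSucc]
          · ext; simp [Fin.val_succ]; omega
          · rw [Fin.le_def]; simp; omega
        rw [hidx, insC_perm_succAbove, insC_col_succAbove]
        have : i - 1 - 1 = i - 2 := by omega
        simp [this]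
      · rw [wval, dif_neg (by omega), wval, dif_neg (by omega)]

lemma rk_bound (L : Finset (Fin a)) (τ : ColPerm a m) (i : ℕ) :
    -(((m : ℤ) + 1) * a) < rkL L (wval τ i) ∧ rkL L (wval τ i) < ((m : ℤ) + 1) * a := by
  have ha : 1 ≤ a := Nat.one_le_iff_ne_zero.mpr (NeZero.ne a)
  have ha' : (1 : ℤ) ≤ (a : ℤ) := by exact_mod_cast ha
  rw [wval]
  split_ifs with h
  · set c := τ.2 ⟨i - 1, by omega⟩ with hc
    set v := τ.1 ⟨i - 1, by omega⟩ with hv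
    have hca : ((c : ℕ) : ℤ) < a := by exact_mod_cast c.is_lt
    have hvb : ((v : ℕ) : ℤ) < m := by exact_mod_cast v.is_lt
    have hc0 : (0 : ℤ) ≤ ((c : ℕ) : ℤ) := by positivity
    have key : (((v : ℕ) + 1 : ℕ) : ℤ) * a + ((c : ℕ) : ℤ) < ((m : ℤ) + 1) * a := by
      push_cast
      nlinarith
    have key0 : (0 : ℤ) < (((v : ℕ) + 1 : ℕ) : ℤ) * a + ((c : ℕ) : ℤ) := by
      push_cast
      nlinarith
    rw [rkL]
    simp only [Nat.add_eq_zero, and_false, if_false]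
    split_ifs <;> constructor <;> push_cast at * <;> linarith
  · simp only [rkL]
    norm_num
    omega

lemma rk_new_lt {L : Finset (Fin a)} {t : Fin a} (h : t ∈ L) (τ : ColPerm a m) (i : ℕ) :
    rkL L ((t : Fin a), m + 1) < rkL L (wval τ i) := by
  have h1 := (rk_bound L τ i).1
  have hr : rkL L ((t : Fin a), m + 1) = -((((m : ℕ) + 1 : ℕ) : ℤ) * a + (t : ℤ)) := by
    rw [rkL]; simp [h]
  have ht : (0 : ℤ) ≤ (t : ℤ) := by positivity
  rw [hr]; push_cast at *; linarith

lemma rk_new_gt {L : Finset (Fin a)} {t : Fin a} (h : t ∉ L) (τ : ColPerm a m) (i : ℕ) :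
    rkL L (wval τ i) < rkL L ((t : Fin a), m + 1) := by
  have h1 := (rk_bound L τ i).2
  have hr : rkL L ((t : Fin a), m + 1) = (((m : ℕ) + 1 : ℕ) : ℤ) * a + (t : ℤ) := by
    rw [rkL]; simp [h]
  have ht : (0 : ℤ) ≤ (t : ℤ) := by positivity
  rw [hr]; push_cast at *; linarith

lemma desL_insC (L : Finset (Fin a)) (τ : ColPerm a m) (t : Fin a) (p : Fin (m+1)) :
    desL L (insC τ t p) + (if (p : ℕ) ∈ DesL L τ then 1 else 0)
      = desL L τ + (if t ∈ L ∨ (p : ℕ) < m then 1 else 0) := by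
  set σ := insC τ t p with hσdef
  set P := (p : ℕ) with hPdef
  have hP : P ≤ m := Fin.is_le p
  set f : ℕ → ℕ := fun i => if rkL L (wval σ (i+1)) < rkL L (wval σ i) then 1 else 0 with hf
  set g : ℕ → ℕ := fun i => if rkL L (wval τ (i+1)) < rkL L (wval τ i) then 1 else 0 with hg
  have hdσ : desL L σ = ∑ i ∈ Finset.range (m+1), f i := Finset.card_filter _ _
  have hdτ : desL L τ = ∑ i ∈ Finset.range m, g i := Finset.card_filter _ _
  have hw : ∀ i, wval σ i =
      if i ≤ P then wval τ i else if i = P + 1 then ((t : Fin a), m + 1) else wval τ (i - 1) :=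
    wval_insC τ t p
  have hfg : ∀ i, i < P → f i = g i := by
    intro i hi
    rw [hf, hg]
    simp only
    rw [hw, hw, if_pos (by omega : i + 1 ≤ P), if_pos (by omega : i ≤ P)]
  have hfP : f P = if t ∈ L then 1 else 0 := by
    rw [hf]; simp only
    rw [hw, hw, if_neg (by omega : ¬ (P + 1 ≤ P)), if_pos rfl, if_pos (le_refl P)]
    by_cases h : t ∈ L
    · rw [if_pos h, if_pos (rk_new_lt h τ P)]
    · rw [if_neg h, if_neg (not_lt.mpr (le_of_lt (rk_new_gt h τ P)))]
  have hfP1 : f (P+1) = if t ∈ L then 0 else 1 := by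
    rw [hf]; simp only
    rw [hw, hw, if_neg (by omega : ¬ (P + 1 + 1 ≤ P)), if_neg (by omega : ¬ (P + 1 + 1 = P + 1)),
      if_neg (by omega : ¬ (P + 1 ≤ P)), if_pos rfl]
    have e1 : P + 1 + 1 - 1 = P + 1 := by omega
    rw [e1]
    by_cases h : t ∈ L
    · rw [if_pos h, if_neg (not_lt.mpr (le_of_lt (rk_new_lt h τ (P+1))))]
    · rw [if_neg h, if_pos (rk_new_gt h τ (P+1))]
  have hfhi : ∀ i, P < i → f (i+1) = g i := by
    intro i hi
    rw [hf, hg]; simp only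
    rw [hw, hw, if_neg (by omega : ¬ (i + 1 + 1 ≤ P)), if_neg (by omega : ¬ (i + 1 + 1 = P + 1)),
      if_neg (by omega : ¬ (i + 1 ≤ P)), if_neg (by omega : ¬ (i + 1 = P + 1))]
    have e1 : i + 1 + 1 - 1 = i + 1 := by omega
    have e2 : i + 1 - 1 = i := by omega
    rw [e1, e2]
  have hmem : (if P ∈ DesL L τ then 1 else 0) = (if P < m then g P else 0) := by
    by_cases hPm : P < m
    · rw [if_pos hPm, hg]
      simp only [DesL, Finset.mem_filter, Finset.mem_range]
      by_cases hd : rkL L (wval τ (P+1)) < rkL L (wval τ P)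
      · rw [if_pos ⟨hPm, hd⟩, if_pos hd]
      · rw [if_neg (by tauto), if_neg hd]
    · rw [if_neg hPm, if_neg]
      intro hmm
      have := Finset.mem_range.mp (Finset.mem_filter.mp hmm).1
      omega
  obtain ⟨k, hk⟩ : ∃ k, P + k = m := ⟨m - P, by omega⟩
  have hsσ : ∑ i ∈ Finset.range (m+1), f i
      = (∑ i ∈ Finset.range P, f i) + ∑ i ∈ Finset.range (k+1), f (P + i) := by
    rw [show m + 1 = P + (k+1) by omega, Finset.sum_range_add]
  have hsτ : ∑ i ∈ Finset.range m, g i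
      = (∑ i ∈ Finset.range P, g i) + ∑ i ∈ Finset.range k, g (P + i) := by
    rw [show m = P + k by omega, Finset.sum_range_add]
  have hS : ∑ i ∈ Finset.range P, f i = ∑ i ∈ Finset.range P, g i :=
    Finset.sum_congr rfl fun i hi => hfg i (Finset.mem_range.mp hi)
  rw [hdσ, hdτ, hsσ, hsτ, hS, hmem]
  rcases Nat.eq_zero_or_pos k with hk0 | hkpos
  · subst hk0
    simp only [Nat.zero_add, Finset.sum_range_zero, Finset.sum_range_one, Nat.add_zero]
    rw [if_neg (by omega : ¬ P < m), hfP]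
    have : ¬ P < m := by omega
    by_cases h : t ∈ L
    · rw [if_pos h, if_pos (Or.inl h)]
    · rw [if_neg h, if_neg (by tauto)]
  · obtain ⟨k', rfl⟩ : ∃ k', k = k' + 1 := ⟨k - 1, by omega⟩
    have hPm : P < m := by omega
    have hsf : ∑ i ∈ Finset.range (k' + 1 + 1), f (P + i)
        = (∑ i ∈ Finset.range k', g (P + (i + 1))) + f (P + 1) + f P := by
      rw [Finset.sum_range_succ' (fun i => f (P + i)), Finset.sum_range_succ'
        (fun i => f (P + (i + 1)))]
      have : ∀ i ∈ Finset.range k', f (P + (i + 1 + 1)) = g (P + (i + 1)) := by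
        intro i _
        have := hfhi (P + (i + 1)) (by omega)
        rw [show P + (i + 1 + 1) = P + (i + 1) + 1 by omega, this]
      rw [Finset.sum_congr rfl this]
      simp [add_assoc]
      try omega
    have hsg : ∑ i ∈ Finset.range (k' + 1), g (P + i)
        = (∑ i ∈ Finset.range k', g (P + (i + 1))) + g P := by
      rw [Finset.sum_range_succ' (fun i => g (P + i))]
      simp
    rw [hsf, hsg, if_pos hPm, if_pos (Or.inr hPm), hfP, hfP1]
    by_cases h : t ∈ L <;> simp [h] <;> try omega

lemma insC_injective :
    Function.Injective (fun x : ColPerm a m × Fin a × Fin (m+1) => insC x.1 x.2.1 x.2.2) := by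
  rintro ⟨τ, t, p⟩ ⟨τ', t', p'⟩ h
  simp only at h
  have h1 : (insC τ t p).1 = (insC τ' t' p').1 := by rw [h]
  have h2 : (insC τ t p).2 = (insC τ' t' p').2 := by rw [h]
  have hp : p = p' := by
    apply (insC τ t p).1.injective
    rw [insC_perm_p, h1, insC_perm_p]
  subst hp
  have ht : t = t' := by
    have := congrFun h2 p
    rwa [insC_col_p, insC_col_p] at this
  subst ht
  have hτ1 : τ.1 = τ'.1 := by
    apply Equiv.ext
    intro j
    have : (insC τ t p).1 (p.succAbove j) = (insC τ' t p).1 (p.succAbove j) := by rw [h1]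
    rw [insC_perm_succAbove, insC_perm_succAbove] at this
    exact Fin.castSucc_injective m this
  have hτ2 : τ.2 = τ'.2 := by
    funext j
    have := congrFun h2 (p.succAbove j)
    rwa [insC_col_succAbove, insC_col_succAbove] at this
  have : τ = τ' := Prod.ext hτ1 hτ2
  rw [this]

lemma insC_bijective :
    Function.Bijective (fun x : ColPerm a m × Fin a × Fin (m+1) => insC x.1 x.2.1 x.2.2) := by
  rw [Fintype.bijective_iff_injective_and_card]
  refine ⟨insC_injective, ?_⟩
  simp only [Fintype.card_prod, Fintype.card_perm, Fintype.card_fun, Fintype.card_fin]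
  rw [Nat.factorial_succ, pow_succ]
  ring

lemma sum_ite_mem_const {α : Type*} [DecidableEq α] {s D : Finset α} (h : D ⊆ s) (c1 c2 : ℕ) :
    ∑ i ∈ s, (if i ∈ D then c1 else c2) = D.card * c1 + (s.card - D.card) * c2 := by
  rw [Finset.sum_ite]
  rw [Finset.filter_mem_eq_inter, Finset.inter_eq_right.mpr h]
  rw [Finset.sum_const, Finset.sum_const, smul_eq_mul, smul_eq_mul]
  congr 1
  congr 1
  rw [Finset.filter_not, Finset.card_sdiff_of_subset (Finset.filter_subset _ _),
    Finset.filter_mem_eq_inter, Finset.inter_eq_right.mpr h]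

lemma desL_le (L : Finset (Fin a)) (τ : ColPerm a m) : desL L τ ≤ m :=
  le_trans (Finset.card_filter_le _ _) (le_of_eq (Finset.card_range m))

lemma anum_succ (L : Finset (Fin a)) (s : ℕ) :
    (Anum a (m+1) s L : ℤ) =
      ((a : ℤ) * (s + 1) - (L.card : ℤ)) * (Anum a m s L : ℤ) +
      (if s = 0 then 0 else ((a : ℤ) * ((m : ℤ) + 1 - s) + (L.card : ℤ)) *
        (Anum a m (s-1) L : ℤ)) := by
  have hℓ : L.card ≤ a := by simpa using Finset.card_le_univ L
  have h1 : Anum a (m+1) s L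
      = (Finset.univ.filter fun x : ColPerm a m × Fin a × Fin (m+1) =>
          desL L (insC x.1 x.2.1 x.2.2) = s).card := by
    rw [Anum, ← Fintype.card_subtype, ← Fintype.card_subtype]
    exact (Fintype.card_congr
      (((Equiv.ofBijective _ insC_bijective).subtypeEquiv (fun x => Iff.rfl)))).symm
  have h2 : (Finset.univ.filter fun x : ColPerm a m × Fin a × Fin (m+1) =>
          desL L (insC x.1 x.2.1 x.2.2) = s).card
      = ∑ τ : ColPerm a m, ∑ t : Fin a, ∑ p : Fin (m+1),
          (if desL L (insC τ t p) = s then 1 else 0) := by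
    rw [Finset.card_filter, Fintype.sum_prod_type]
    exact Finset.sum_congr rfl fun τ _ => by rw [Fintype.sum_prod_type]
  have h3 : ∀ (τ : ColPerm a m) (t : Fin a),
      ∑ p : Fin (m+1), (if desL L (insC τ t p) = s then 1 else 0)
      = desL L τ * (if s = desL L τ then 1 else 0)
        + (m - desL L τ) * (if s = desL L τ + 1 then 1 else 0)
        + (if t ∈ L then (if s = desL L τ + 1 then 1 else 0)
            else (if s = desL L τ then 1 else 0)) := by
    intro τ t
    have hD : DesL L τ ⊆ Finset.range m := Finset.filter_subset _ _
    have step1 : ∑ p : Fin (m+1), (if desL L (insC τ t p) = s then 1 else 0)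
        = ∑ i ∈ Finset.range (m+1),
            (if s + (if i ∈ DesL L τ then 1 else 0)
              = desL L τ + (if t ∈ L ∨ i < m then 1 else 0) then 1 else 0) := by
      rw [← Fin.sum_univ_eq_sum_range (fun i =>
        (if s + (if i ∈ DesL L τ then 1 else 0)
          = desL L τ + (if t ∈ L ∨ i < m then 1 else 0) then (1:ℕ) else 0)) (m+1)]
      refine Finset.sum_congr rfl fun p _ => ?_
      refine if_congr ?_ rfl rfl
      have h := desL_insC L τ t p
      constructor <;> intro h' <;> omega
    rw [step1, Finset.sum_range_succ]
    have hmain : ∀ i ∈ Finset.range m,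
        (if s + (if i ∈ DesL L τ then 1 else 0)
          = desL L τ + (if t ∈ L ∨ i < m then 1 else 0) then (1:ℕ) else 0)
        = (if i ∈ DesL L τ then (if s = desL L τ then 1 else 0)
            else (if s = desL L τ + 1 then 1 else 0)) := by
      intro i hi
      have him : i < m := Finset.mem_range.mp hi
      rw [if_pos (Or.inr him)]
      by_cases hd : i ∈ DesL L τ
      · rw [if_pos hd, if_pos hd]
        exact if_congr (by omega) rfl rfl
      · rw [if_neg hd, if_neg hd]
        exact if_congr (by omega) rfl rfl
    rw [Finset.sum_congr rfl hmain, sum_ite_mem_const hD, Finset.card_range]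
    have hlast : (if s + (if m ∈ DesL L τ then 1 else 0)
        = desL L τ + (if t ∈ L ∨ m < m then 1 else 0) then (1:ℕ) else 0)
        = (if t ∈ L then (if s = desL L τ + 1 then 1 else 0)
            else (if s = desL L τ then 1 else 0)) := by
      have hm : m ∉ DesL L τ := fun hmm => absurd (Finset.mem_range.mp (hD hmm)) (lt_irrefl m)
      rw [if_neg hm]
      by_cases ht : t ∈ L
      · rw [if_pos ht, if_pos (Or.inl ht)]
        exact if_congr (by omega) rfl rfl
      · rw [if_neg (by simp [ht] : ¬ (t ∈ L ∨ m < m)), if_neg ht]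
        exact if_congr (by omega) rfl rfl
    rw [hlast]
    simp only [desL]
    try ring
  have h4 : ∀ τ : ColPerm a m,
      ∑ t : Fin a, (desL L τ * (if s = desL L τ then 1 else 0)
        + (m - desL L τ) * (if s = desL L τ + 1 then 1 else 0)
        + (if t ∈ L then (if s = desL L τ + 1 then 1 else 0)
            else (if s = desL L τ then 1 else 0)))
      = a * (desL L τ * (if s = desL L τ then 1 else 0)
          + (m - desL L τ) * (if s = desL L τ + 1 then 1 else 0))
        + (L.card * (if s = desL L τ + 1 then 1 else 0)
          + (a - L.card) * (if s = desL L τ then 1 else 0)) := by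
    intro τ
    rw [Finset.sum_add_distrib, Finset.sum_const, Finset.card_univ, Fintype.card_fin,
      smul_eq_mul, sum_ite_mem_const (Finset.subset_univ L), Finset.card_univ,
      Fintype.card_fin]
  have h5 : Anum a (m+1) s L = ∑ τ : ColPerm a m,
      (a * (desL L τ * (if s = desL L τ then 1 else 0)
          + (m - desL L τ) * (if s = desL L τ + 1 then 1 else 0))
        + (L.card * (if s = desL L τ + 1 then 1 else 0)
          + (a - L.card) * (if s = desL L τ then 1 else 0))) := by
    rw [h1, h2]
    exact Finset.sum_congr rfl fun τ _ => by
      rw [Finset.sum_congr rfl fun t _ => h3 τ t, h4 τ]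
  have h6 : ∀ τ : ColPerm a m,
      ((a * (desL L τ * (if s = desL L τ then 1 else 0)
          + (m - desL L τ) * (if s = desL L τ + 1 then 1 else 0))
        + (L.card * (if s = desL L τ + 1 then 1 else 0)
          + (a - L.card) * (if s = desL L τ then 1 else 0)) : ℕ) : ℤ)
      = (if desL L τ = s then (a : ℤ) * (s + 1) - (L.card : ℤ) else 0)
        + (if desL L τ + 1 = s then (a : ℤ) * ((m : ℤ) + 1 - s) + (L.card : ℤ) else 0) := by
    intro τ
    have hd := desL_le L τ
    by_cases e1 : desL L τ = s
    · rw [if_pos e1, if_neg (show ¬ (desL L τ + 1 = s) by omega),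
        if_pos (show s = desL L τ from e1.symm),
        if_neg (show ¬ (s = desL L τ + 1) by omega)]
      simp only [mul_one, mul_zero, add_zero, zero_add]
      rw [e1]
      push_cast [Nat.cast_sub hℓ]
      ring
    · by_cases e2 : desL L τ + 1 = s
      · rw [if_neg e1, if_pos e2, if_neg (show ¬ (s = desL L τ) from fun h => e1 h.symm),
          if_pos (show s = desL L τ + 1 from e2.symm)]
        simp only [mul_one, mul_zero, add_zero, zero_add]
        have hcast : (desL L τ : ℤ) = (s : ℤ) - 1 := by
          have : ((desL L τ : ℕ) : ℤ) + 1 = (s : ℤ) := by exact_mod_cast e2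
          omega
        push_cast [Nat.cast_sub hd]
        rw [hcast]
        ring
      · rw [if_neg e1, if_neg e2, if_neg (show ¬ (s = desL L τ) from fun h => e1 h.symm),
          if_neg (show ¬ (s = desL L τ + 1) from fun h => e2 h.symm)]
        simp
  rw [h5, Nat.cast_sum, Finset.sum_congr rfl fun τ _ => h6 τ, Finset.sum_add_distrib]
  congr 1
  · rw [← Finset.sum_filter, Finset.sum_const, nsmul_eq_mul, Anum]
    ring
  · by_cases hs : s = 0
    · rw [if_pos hs]
      rw [Finset.sum_congr rfl fun τ _ => if_neg (by omega : ¬ desL L τ + 1 = s)]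
      simp
    · rw [if_neg hs]
      obtain ⟨s', rfl⟩ : ∃ s', s = s' + 1 := ⟨s - 1, by omega⟩
      rw [Finset.sum_congr rfl (fun τ _ => if_congr
        (show desL L τ + 1 = s' + 1 ↔ desL L τ = s' by omega) rfl rfl)]
      rw [← Finset.sum_filter, Finset.sum_const, nsmul_eq_mul]
      rw [show s' + 1 - 1 = s' by omega]
      rw [Anum]
      ring

end AnumAux

/-- The Eulerian recurrence
`A_{a,ℓ,n,s} = (a(s+1) − ℓ) A_{a,ℓ,n-1,s} + (a(n−s) + ℓ) A_{a,ℓ,n-1,s-1}`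
(with `ℓ = |L|` and the convention `A_{a,ℓ,n-1,-1} = 0`). -/
theorem Anum_recurrence (a n s : ℕ) [NeZero a] (L : Finset (Fin a)) (hn : 1 ≤ n) :
    (Anum a n s L : ℤ) =
      ((a : ℤ) * (s + 1) - (L.card : ℤ)) * (Anum a (n - 1) s L : ℤ) +
      ((a : ℤ) * ((n : ℤ) - (s : ℤ)) + (L.card : ℤ)) *
        (if s = 0 then 0 else (Anum a (n - 1) (s - 1) L : ℤ)) := by
  obtain ⟨m, rfl⟩ : ∃ m, n = m + 1 := ⟨n - 1, by omega⟩
  rw [show m + 1 - 1 = m by omega]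
  rw [AnumAux.anum_succ L s]
  congr 1
  by_cases hs : s = 0
  · rw [if_pos hs, if_pos hs, mul_zero]
  · rw [if_neg hs, if_neg hs]
    have : ((m : ℤ) + 1 : ℤ) = ((m + 1 : ℕ) : ℤ) := by push_cast; ring
    rw [this]
end
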